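/- arXiv:2206.03047 — 5 statements merged into one kernel-verified Lean document; each statement's English description precedes it below -/
import Mathlib

section
/- For every n ≥ 0, the Tower of Hanoi-Fibonacci with n disks admits a solution, and the minimal possible length of a solution is F_{n+2} − 1 (so an optimal solution passes through exactly F_{n+2} distinct states). -/
/-- A `k`-Fibonacci move on states of the Tower of Hanoi-Fibonacci with `n` disks.
Disks are numbered `1,…,n`; disk `k` corresponds to index `i : Fin n` with `(i : ℕ) + 1 = k`.
Pegs are `Fin 3` (`0 = A`, `1 = B`, `2 = C`). -/
def FibMove (n k : ℕ) (s s' : Fin n → Fin 3) : Prop :=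
  1 ≤ k ∧ k ≤ n ∧
  ∃ X Y Z : Fin 3, X ≠ Y ∧ Y ≠ Z ∧ X ≠ Z ∧
    (∀ i : Fin n, (i : ℕ) + 1 = k → s i = X) ∧
    (∀ i : Fin n, (i : ℕ) + 1 < k → s i ≠ X) ∧
    (∀ i : Fin n, (i : ℕ) + 1 < k → s i = Y) ∧
    (∀ i : Fin n, ((i : ℕ) + 1 = k ∨ (i : ℕ) + 2 = k) → s' i = Z) ∧
    (∀ i : Fin n, (i : ℕ) + 1 ≠ k → (i : ℕ) + 2 ≠ k → s' i = s i)

/-- `s 0, s 1, …, s m` is a solution of length `m` of the Tower of Hanoi-Fibonacci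
with `n` disks: it starts with all disks on peg `A = 0`, ends with all disks on
peg `C = 2`, and each step is a Fibonacci move. -/
def IsSolution (n m : ℕ) (s : ℕ → (Fin n → Fin 3)) : Prop :=
  (s 0 = fun _ => 0) ∧ (s m = fun _ => 2) ∧ ∀ i < m, ∃ k, FibMove n k (s i) (s (i + 1))

/-!
With `L n = F (n + 2) - 1` (`optLen n`) one has `L (n + 1) = L n + 1 + L (n - 1)`, which is the
cost of the recursive strategy: the `n` smaller disks go to the auxiliary peg, a single move
carries the two largest disks to the target, and the `n - 1` smallest follow.

For optimality, `potential n s t` is defined by the analogous recursion over the two possible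
routes of the largest disk to `t`. A single move lowers it by at most one (a case check for the
move of the largest disk, induction for the others), and on a tower standing on a peg other
than `t` it equals `L n`.
-/

theorem Fin.snoc_const {α : Type*} {n : ℕ} (x : α) :
    (Fin.snoc (fun _ : Fin n => x) x : Fin (n + 1) → α) = fun _ => x := by
  ext i
  induction i using Fin.lastCases <;> simp

namespace HanoiFib

def optLen (n : ℕ) : ℕ := Nat.fib (n + 2) - 1

theorem optLen_zero : optLen 0 = 0 := rfl

-- At `n = 0` the truncated `optLen (0 - 1) = optLen 0 = 0` is still the true value `F 1 - 1`.
theorem optLen_succ (n : ℕ) : optLen (n + 1) = optLen n + 1 + optLen (n - 1) := by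
  rcases n with _ | n
  · rfl
  · show Nat.fib (n + 4) - 1 = Nat.fib (n + 3) - 1 + 1 + (Nat.fib (n + 2) - 1)
    have h : Nat.fib (n + 4) = Nat.fib (n + 2) + Nat.fib (n + 3) := Nat.fib_add_two
    have h2 := Nat.fib_pos.2 (show 0 < n + 2 by omega)
    have h3 := Nat.fib_pos.2 (show 0 < n + 3 by omega)
    omega

-- The pegs `0, 1, 2` sum to `0` in `Fin 3`.
def third (a b : Fin 3) : Fin 3 := -a - b

theorem third_ne_left : ∀ {a b : Fin 3}, a ≠ b → third a b ≠ a := by decide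

theorem third_ne_right : ∀ {a b : Fin 3}, a ≠ b → third a b ≠ b := by decide

theorem third_eq : ∀ {a b c : Fin 3}, a ≠ b → b ≠ c → a ≠ c → third a b = c := by decide

theorem eq_or_eq_or_eq_of_ne : ∀ {a b c : Fin 3}, a ≠ b → b ≠ c → a ≠ c → ∀ t : Fin 3,
    t = a ∨ t = b ∨ t = c := by decide

theorem fibMove_snoc_snoc_iff {n k : ℕ} (hk : k ≤ n) {a b : Fin n → Fin 3} {x y : Fin 3} :
    FibMove (n + 1) k (Fin.snoc a x) (Fin.snoc b y) ↔ FibMove n k a b ∧ x = y := by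
  simp only [FibMove, Fin.forall_fin_succ', Fin.snoc_castSucc, Fin.snoc_last, Fin.val_castSucc,
    Fin.val_last]
  constructor
  · rintro ⟨hk1, -, X, Y, Z, hXY, hYZ, hXZ, ⟨h1, -⟩, ⟨h2, -⟩, ⟨h3, -⟩, ⟨h4, -⟩, h5, hyx⟩
    exact ⟨⟨hk1, hk, X, Y, Z, hXY, hYZ, hXZ, h1, h2, h3, h4, h5⟩, (hyx (by omega) (by omega)).symm⟩
  · rintro ⟨⟨hk1, -, X, Y, Z, hXY, hYZ, hXZ, h1, h2, h3, h4, h5⟩, rfl⟩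
    refine ⟨hk1, by omega, X, Y, Z, hXY, hYZ, hXZ, ⟨h1, by omega⟩, ⟨h2, by omega⟩, ⟨h3, by omega⟩,
      ⟨h4, by omega⟩, h5, fun _ _ => rfl⟩

theorem fibMove_top_iff {n : ℕ} {a b : Fin n → Fin 3} {u v x y : Fin 3} :
    FibMove (n + 2) (n + 2) (Fin.snoc (Fin.snoc a u) x) (Fin.snoc (Fin.snoc b v) y) ↔
      x ≠ u ∧ u ≠ y ∧ x ≠ y ∧ a = (fun _ => u) ∧ b = a ∧ v = y := by
  simp only [FibMove, Fin.forall_fin_succ', Fin.snoc_castSucc, Fin.snoc_last, Fin.val_castSucc,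
    Fin.val_last]
  constructor
  · rintro ⟨-, -, X, Y, Z, hXY, hYZ, hXZ, ⟨-, hx⟩, -, ⟨⟨ha, hu⟩, -⟩, ⟨⟨-, hv⟩, hy⟩, ⟨hb, -⟩, -⟩
    obtain ⟨rfl, rfl, rfl⟩ : x = X ∧ u = Y ∧ y = Z := ⟨hx trivial, hu (by omega), hy (.inl trivial)⟩
    exact ⟨hXY, hYZ, hXZ, funext fun i => ha i (by omega), funext fun i => hb i (by omega) (by omega),
      hv (.inr trivial)⟩
  · rintro ⟨hxu, huy, hxy, rfl, rfl, hvy⟩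
    subst v
    refine ⟨by omega, le_rfl, x, u, y, hxu, huy, hxy, ⟨⟨fun _ _ => by omega, by omega⟩, fun _ => rfl⟩,
      ⟨⟨fun _ _ => hxu.symm, fun _ => hxu.symm⟩, by omega⟩, ⟨⟨fun _ _ => rfl, fun _ => rfl⟩, by omega⟩,
      ⟨⟨fun _ _ => by omega, fun _ => rfl⟩, fun _ => rfl⟩, ⟨fun _ _ _ => rfl, by omega⟩, by omega⟩

def IsPath (n m : ℕ) (a b : Fin n → Fin 3) (s : ℕ → Fin n → Fin 3) : Prop :=
  s 0 = a ∧ s m = b ∧ ∀ i < m, ∃ k, FibMove n k (s i) (s (i + 1))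

theorem isSolution_iff {n m : ℕ} {s : ℕ → Fin n → Fin 3} :
    IsSolution n m s ↔ IsPath n m (fun _ => 0) (fun _ => 2) s :=
  Iff.rfl

theorem IsPath.tail {n m : ℕ} {a b : Fin n → Fin 3} {s : ℕ → Fin n → Fin 3}
    (h : IsPath n (m + 1) a b s) : IsPath n m (s 1) b (fun i => s (i + 1)) :=
  ⟨rfl, h.2.1, fun i hi => h.2.2 (i + 1) (by omega)⟩

theorem IsPath.append {n m m' : ℕ} {a b c : Fin n → Fin 3} {s s' : ℕ → Fin n → Fin 3}
    (h : IsPath n m a b s) (h' : IsPath n m' b c s') :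
    IsPath n (m + m') a c (fun i => if i ≤ m then s i else s' (i - m)) := by
  refine ⟨by simpa using h.1, ?_, fun i hi => ?_⟩
  · rcases m'.eq_zero_or_pos with rfl | hm'
    · simpa [h.2.1, ← h'.1] using h'.2.1
    · simpa [show ¬ m + m' ≤ m by omega] using h'.2.1
  · rcases lt_trichotomy i m with hi' | rfl | hi'
    · simpa [hi'.le, Nat.succ_le_of_lt hi'] using h.2.2 i hi'
    · simpa [h.2.1, ← h'.1] using h'.2.2 0 (by omega)
    · simpa [hi'.not_ge, show ¬ i + 1 ≤ m by omega, show i + 1 - m = i - m + 1 by omega]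
        using h'.2.2 (i - m) (by omega)

theorem IsPath.snoc {n m : ℕ} {a b : Fin n → Fin 3} {s : ℕ → Fin n → Fin 3}
    (h : IsPath n m a b s) (x : Fin 3) :
    IsPath (n + 1) m (Fin.snoc a x) (Fin.snoc b x) (fun i => Fin.snoc (s i) x) := by
  refine ⟨by simp only [h.1], by simp only [h.2.1], fun i hi => ?_⟩
  obtain ⟨k, hk⟩ := h.2.2 i hi
  exact ⟨k, (fibMove_snoc_snoc_iff hk.2.1).2 ⟨hk, rfl⟩⟩

theorem isPath_one {n k : ℕ} {a b : Fin n → Fin 3} (h : FibMove n k a b) :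
    IsPath n 1 a b (fun i => if i = 0 then a else b) :=
  ⟨rfl, rfl, fun i hi => ⟨k, by simpa [Nat.lt_one_iff.1 hi] using h⟩⟩

theorem fibMove_one_const {p q : Fin 3} (hpq : p ≠ q) :
    FibMove 1 1 (fun _ => p) (fun _ => q) :=
  ⟨le_rfl, le_rfl, p, third p q, q, (third_ne_left hpq).symm, third_ne_right hpq, hpq,
    fun _ _ => rfl, fun _ _ => by omega, fun _ _ => by omega, fun _ _ => rfl, fun _ _ => by omega⟩

theorem exists_isPath_const : ∀ (n : ℕ) {p q : Fin 3}, p ≠ q →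
    ∃ s, IsPath n (optLen n) (fun _ => p) (fun _ => q) s
  | 0, p, _, _ =>
    ⟨fun _ _ => p, rfl, Subsingleton.elim _ _, fun _ hi => absurd hi (by simp [optLen_zero])⟩
  | 1, _, _, hpq => ⟨_, isPath_one (fibMove_one_const hpq)⟩
  | n + 2, p, q, hpq => by
    obtain ⟨s₁, h₁⟩ := exists_isPath_const (n + 1) (third_ne_left hpq).symm
    obtain ⟨s₂, h₂⟩ := exists_isPath_const n (third_ne_right hpq)
    have hmove : FibMove (n + 2) (n + 2) (Fin.snoc (Fin.snoc (fun _ => third p q) (third p q)) p)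
        (Fin.snoc (Fin.snoc (fun _ => third p q) q) q) :=
      fibMove_top_iff.2 ⟨(third_ne_left hpq).symm, third_ne_right hpq, hpq, rfl, rfl, rfl⟩
    rw [Fin.snoc_const] at hmove
    have h := ((h₁.snoc p).append (isPath_one hmove)).append ((h₂.snoc q).snoc q)
    simp only [Fin.snoc_const] at h
    rw [optLen_succ, Nat.add_sub_cancel]
    exact ⟨_, h⟩

/-- The better of two routes from `s` to the tower on `t`. When the largest disk `N = n + 1` is not
on `t`, either disks `1, …, N - 1` gather on the third peg, the `N`-move carries disks `N - 1, N`
to `t` and the `N - 2` smallest follow; or disks `1, …, N - 1` gather on `t`, the `N`-move carries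
disks `N - 1, N` to the third peg, the `(N - 1)`-move carries disks `N - 2, N - 1` to the peg that
disk `N` left, the `N - 3` smallest follow them, and the first route ends in `1 + optLen (N - 2)`
more moves. -/
def potential : (n : ℕ) → (Fin n → Fin 3) → Fin 3 → ℕ
  | 0, _, _ => 0
  | n + 1, s, t =>
    if s (Fin.last n) = t then potential n (Fin.init s) t
    else min (potential n (Fin.init s) (third (s (Fin.last n)) t) + 1 + optLen (n - 1))
      (potential n (Fin.init s) t + 3 + optLen (n - 2) + optLen (n - 1))

theorem potential_snoc {n : ℕ} (s : Fin n → Fin 3) (x t : Fin 3) :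
    potential (n + 1) (Fin.snoc s x) t =
      if x = t then potential n s t
      else min (potential n s (third x t) + 1 + optLen (n - 1))
        (potential n s t + 3 + optLen (n - 2) + optLen (n - 1)) := by
  simp only [potential, Fin.snoc_last, Fin.init_snoc]

theorem potential_const (n : ℕ) (p t : Fin 3) :
    potential n (fun _ => p) t = if p = t then 0 else optLen n := by
  induction n generalizing t with
  | zero => simp [potential, optLen_zero]
  | succ n ih =>
    rw [← Fin.snoc_const, potential_snoc, ih, ih]
    by_cases hpt : p = t
    · simp [hpt]
    · simp only [hpt, (third_ne_left hpt).symm, if_false, optLen_succ]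
      omega

theorem potential_le_of_topMove {n : ℕ} {x u y : Fin 3} (hxu : x ≠ u) (huy : u ≠ y) (hxy : x ≠ y)
    (t : Fin 3) :
    potential (n + 2) (Fin.snoc (Fin.snoc (fun _ => u) u) x) t ≤
      potential (n + 2) (Fin.snoc (Fin.snoc (fun _ => u) y) y) t + 1 := by
  have h₁ := optLen_succ n
  have h₂ := optLen_succ (n + 1)
  have := third_eq hxu huy hxy
  have := third_eq hxy huy.symm hxu
  have := third_eq hxu.symm hxy huy
  have := third_eq huy hxy.symm hxu.symm
  have := third_eq hxy.symm hxu huy.symm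
  have := third_eq huy.symm hxu.symm hxy.symm
  rcases eq_or_eq_or_eq_of_ne hxu huy hxy t with rfl | rfl | rfl <;>
    simp only [Fin.snoc_const, potential_snoc, potential_const, ↓reduceIte, add_tsub_cancel_right,
      Nat.reduceSubDiff, hxu.symm, huy.symm, hxy.symm, *] <;> omega

theorem potential_one_le (s : Fin 1 → Fin 3) (t : Fin 3) : potential 1 s t ≤ 1 := by
  simp only [potential, Nat.zero_sub, optLen_zero]
  split_ifs <;> omega

theorem potential_le_of_fibMove {n k : ℕ} {s s' : Fin n → Fin 3} (h : FibMove n k s s')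
    (t : Fin 3) : potential n s t ≤ potential n s' t + 1 := by
  induction n generalizing k t with
  | zero => exact absurd h.1 (by have := h.2.1; omega)
  | succ n ih =>
    induction s using Fin.snocCases with | _ a x => ?_
    induction s' using Fin.snocCases with | _ b y => ?_
    rcases Nat.lt_or_ge k (n + 1) with hk | hk
    · obtain ⟨hab, rfl⟩ := (fibMove_snoc_snoc_iff (by omega)).1 h
      have h₁ := ih hab t
      have h₂ := ih hab (third x t)
      rw [potential_snoc, potential_snoc]
      split_ifs <;> omega
    obtain rfl : k = n + 1 := le_antisymm h.2.1 hk
    rcases n with _ | n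
    · exact (potential_one_le _ t).trans (Nat.le_add_left _ _)
    induction a using Fin.snocCases with | _ a u => ?_
    induction b using Fin.snocCases with | _ b v => ?_
    obtain ⟨hxu, huy, hxy, rfl, rfl, rfl⟩ := fibMove_top_iff.1 h
    exact potential_le_of_topMove hxu huy hxy t

theorem potential_le_of_isPath {n m : ℕ} {a : Fin n → Fin 3} {t : Fin 3}
    {s : ℕ → Fin n → Fin 3} (h : IsPath n m a (fun _ => t) s) : potential n a t ≤ m := by
  induction m generalizing a s with
  | zero =>
    obtain ⟨rfl, hend, -⟩ := h
    simp [hend, potential_const]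
  | succ m ih =>
    obtain ⟨k, hk⟩ : ∃ k, FibMove n k a (s 1) := h.1 ▸ h.2.2 0 m.succ_pos
    calc potential n a t ≤ potential n (s 1) t + 1 := potential_le_of_fibMove hk t
      _ ≤ m + 1 := Nat.add_le_add_right (ih h.tail) 1

end HanoiFib

/-- For every `n ≥ 0`, the Tower of Hanoi-Fibonacci with `n` disks
admits a solution, and the minimal possible length of a solution is `F (n+2) - 1`
(so an optimal solution passes through exactly `F (n+2)` distinct states). -/
theorem hanoiFibonacci_solvable_and_optimal_length (n : ℕ) :
    (∃ s, IsSolution n (Nat.fib (n + 2) - 1) s) ∧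
    (∀ m s, IsSolution n m s → Nat.fib (n + 2) - 1 ≤ m) := by
  obtain ⟨s, hs⟩ := HanoiFib.exists_isPath_const n (show (0 : Fin 3) ≠ 2 by decide)
  refine ⟨⟨s, HanoiFib.isSolution_iff.2 hs⟩, fun m s h => ?_⟩
  simpa [HanoiFib.potential_const, HanoiFib.optLen] using
    HanoiFib.potential_le_of_isPath (HanoiFib.isSolution_iff.1 h)
end

section
/- For every n ≥ 0, the Tower of Hanoi-Fibonacci with n disks has exactly one solution of the minimal length F_{n+2} − 1. -/
/-!
`towerDist n u q` counts the moves of the natural recursive strategy that gathers the first `n`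
disks of `u` on `q`. A direct computation shows that a single Fibonacci move lowers it by at most
one; as it equals `F (n + 2) - 1` on a tower standing on another peg, every transfer of a tower
takes at least that many moves. Along a transfer of exactly that length it drops by one at every
move. This forces the first move of the largest disk to come at time `F (n + 1) - 1`, from a tower
of the other disks on the third peg, and to put the two largest disks on the target, where they
stay. A minimal transfer is therefore a minimal transfer of `n - 1` disks, one move, and a minimal
transfer of `n - 2` disks: by induction it is unique, and gluing such pieces produces one.
-/

open Nat (fib)

namespace HanoiFibonacci

def third (a b : Fin 3) : Fin 3 := -(a + b)

theorem third_ne_left : ∀ {a b : Fin 3}, a ≠ b → third a b ≠ a := by decide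

theorem third_ne_right : ∀ {a b : Fin 3}, a ≠ b → third a b ≠ b := by decide

theorem third_eq : ∀ {a b c : Fin 3}, a ≠ b → c ≠ a → c ≠ b → third a b = c := by
  decide

theorem eq_or_eq_or_eq_of_ne : ∀ {x y z q : Fin 3}, x ≠ y → x ≠ z → y ≠ z →
    q = x ∨ q = y ∨ q = z := by
  decide

/-- Disk `d` is the paper's disk `d + 1`. A state is extended to all of `ℕ` so that the same
function can be read as a state of fewer disks; only its values below `n` matter. -/
def Move (n d : ℕ) (u v : ℕ → Fin 3) : Prop :=
  d < n ∧ ∃ Y Z, u d ≠ Y ∧ u d ≠ Z ∧ Y ≠ Z ∧ (∀ j < d, u j = Y) ∧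
    ∀ j < n, v j = if j = d ∨ j + 1 = d then Z else u j

section Move

variable {n m d : ℕ} {u v : ℕ → Fin 3}

theorem Move.extend {u' v' : ℕ → Fin 3} (h : Move m d u v) (hmn : m ≤ n)
    (hu : ∀ j < m, u' j = u j) (hv : ∀ j < m, v' j = v j)
    (hframe : ∀ j, m ≤ j → j < n → v' j = u' j) : Move n d u' v' := by
  obtain ⟨hd, Y, Z, hdY, hdZ, hYZ, hbelow, hmoved⟩ := h
  refine ⟨by omega, Y, Z, by rwa [hu d hd], by rwa [hu d hd], hYZ,
    fun j hj => (hu j (by omega)).trans (hbelow j hj), fun j hj => ?_⟩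
  rcases lt_or_ge j m with hjm | hjm
  · rw [hv j hjm, hmoved j hjm, hu j hjm]
  · rw [hframe j hjm hj, if_neg (by omega)]

theorem Move.restrict (h : Move n d u v) (hd : d < m) (hm : m ≤ n) : Move m d u v := by
  obtain ⟨-, Y, Z, hdY, hdZ, hYZ, hbelow, hmoved⟩ := h
  exact ⟨hd, Y, Z, hdY, hdZ, hYZ, hbelow, fun j hj => hmoved j (by omega)⟩

theorem Move.apply_of_lt {j : ℕ} (h : Move n d u v) (hdj : d < j) (hj : j < n) : v j = u j := by
  obtain ⟨-, Y, Z, -, -, -, -, hmoved⟩ := h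
  rw [hmoved j hj, if_neg (by omega)]

theorem Move.apply_self_ne (h : Move n d u v) : v d ≠ u d := by
  obtain ⟨hd, Y, Z, hdY, hdZ, -, -, hmoved⟩ := h
  rw [hmoved d hd, if_pos (.inl rfl)]
  exact hdZ.symm

theorem Move.top (h : Move (n + 2) (n + 1) u v) :
    ∃ Y Z, u (n + 1) ≠ Y ∧ u (n + 1) ≠ Z ∧ Y ≠ Z ∧ (∀ j ≤ n, u j = Y) ∧
      v (n + 1) = Z ∧ v n = Z ∧ ∀ j < n, v j = Y := by
  obtain ⟨-, Y, Z, hdY, hdZ, hYZ, hbelow, hmoved⟩ := h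
  refine ⟨Y, Z, hdY, hdZ, hYZ, fun j hj => hbelow j (by omega), ?_, ?_, fun j hj => ?_⟩
  · rw [hmoved (n + 1) (by omega), if_pos (.inl rfl)]
  · rw [hmoved n (by omega), if_pos (.inr rfl)]
  · rw [hmoved j (by omega), if_neg (by omega), hbelow j (by omega)]

theorem Move.of_top {Y Z : Fin 3} (hXY : u (n + 1) ≠ Y) (hXZ : u (n + 1) ≠ Z) (hYZ : Y ≠ Z)
    (hu : ∀ j ≤ n, u j = Y) (hv_top : v (n + 1) = Z) (hv_n : v n = Z)
    (hv : ∀ j < n, v j = Y) : Move (n + 2) (n + 1) u v := by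
  refine ⟨by omega, Y, Z, hXY, hXZ, hYZ, fun j hj => hu j (by omega), fun j hj => ?_⟩
  rcases (show j < n ∨ j = n ∨ j = n + 1 by omega) with hj | rfl | rfl
  · rw [if_neg (by omega), hv j hj, hu j hj.le]
  · rw [if_pos (.inr rfl), hv_n]
  · rw [if_pos (.inl rfl), hv_top]

end Move

/-- The number of moves with which the recursive strategy brings disks `0, …, n - 1` of `u` onto
`q`. When disk `n` is not on `q`, the strategy either gathers disks `0, …, n - 1` on the third
peg, moves disk `n` (with `n - 1`) onto `q`, and then the `n - 1` disks left in `F (n + 1) - 1`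
moves; or
gathers them on `q`, moves disk `n` (with `n - 1`) to the third peg, regathers disks `0, …, n - 1`
on its old peg in `F n` moves, moves disk `n` (with `n - 1`) onto `q`, and then the `n - 1` disks
left in `F (n + 1) - 1` moves. -/
def towerDist : ℕ → (ℕ → Fin 3) → Fin 3 → ℕ
  | 0, _, _ => 0
  | n + 1, u, q =>
    if u n = q then towerDist n u q
    else min (towerDist n u (third (u n) q) + fib (n + 1)) (towerDist n u q + fib (n + 2) + 1)

section towerDist

variable {n d : ℕ} {u v : ℕ → Fin 3} {p q : Fin 3}

theorem towerDist_succ_of_eq (h : u n = q) : towerDist (n + 1) u q = towerDist n u q :=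
  if_pos h

theorem towerDist_succ_of_ne (h : u n ≠ q) :
    towerDist (n + 1) u q =
      min (towerDist n u (third (u n) q) + fib (n + 1)) (towerDist n u q + fib (n + 2) + 1) :=
  if_neg h

theorem towerDist_of_forall_eq (h : ∀ j < n, u j = q) : towerDist n u q = 0 := by
  induction n with
  | zero => rfl
  | succ n ih =>
    rw [towerDist_succ_of_eq (h n n.lt_succ_self)]
    exact ih fun j hj => h j (by omega)

theorem towerDist_of_forall_eq_of_ne (h : ∀ j < n, u j = p) (hpq : p ≠ q) :
    towerDist n u q = fib (n + 2) - 1 := by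
  induction n generalizing q with
  | zero => rfl
  | succ n ih =>
    have hp : u n = p := h n n.lt_succ_self
    have h' : ∀ j < n, u j = p := fun j hj => h j (by omega)
    rw [towerDist_succ_of_ne (hp ▸ hpq), hp, ih h' (third_ne_left hpq).symm, ih h' hpq]
    have := Nat.fib_add_two (n := n)
    have := Nat.fib_add_two (n := n + 1)
    grind

theorem fib_succ_le_towerDist (h : u n ≠ q) : fib (n + 1) ≤ towerDist (n + 1) u q := by
  rw [towerDist_succ_of_ne h]
  have : fib (n + 1) ≤ fib (n + 2) := Nat.fib_le_fib_succ
  omega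

theorem towerDist_le_of_top_move (h : Move (n + 2) (n + 1) u v) (q : Fin 3) :
    towerDist (n + 2) u q ≤ towerDist (n + 2) v q + 1 := by
  obtain ⟨Y, Z, hXY, hXZ, hYZ, hu, hv_top, hv_n, hv⟩ := h.top
  have hfib := Nat.fib_add_two (n := n + 1)
  have huY : towerDist (n + 1) u Y = 0 := towerDist_of_forall_eq fun j hj => hu j (by omega)
  have hvX : fib (n + 1) ≤ towerDist (n + 1) v (u (n + 1)) :=
    fib_succ_le_towerDist (hv_n ▸ hXZ.symm)
  have hvY : fib (n + 1) ≤ towerDist (n + 1) v Y := fib_succ_le_towerDist (hv_n ▸ hYZ.symm)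
  rcases eq_or_eq_or_eq_of_ne (q := q) hXY hXZ hYZ with rfl | rfl | rfl
  · have hu_q : towerDist (n + 2) u (u (n + 1)) = fib (n + 3) - 1 := by
      rw [towerDist_succ_of_eq rfl]
      exact towerDist_of_forall_eq_of_ne (fun j hj => hu j (by omega)) hXY.symm
    rw [hu_q, towerDist_succ_of_ne (n := n + 1) (hv_top ▸ hXZ.symm), hv_top,
      third_eq hXZ.symm hYZ hXY.symm]
    grind
  · rw [towerDist_succ_of_ne (n := n + 1) hXY,
      towerDist_succ_of_ne (n := n + 1) (hv_top ▸ hYZ.symm), hv_top, huY,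
      third_eq hYZ.symm hXZ hXY]
    grind
  · have hv_q : towerDist (n + 2) v q = fib (n + 2) - 1 := by
      rw [towerDist_succ_of_eq hv_top, towerDist_succ_of_eq hv_n]
      exact towerDist_of_forall_eq_of_ne hv hYZ
    rw [towerDist_succ_of_ne (n := n + 1) hXZ, hv_q, third_eq hXZ hXY.symm hYZ, huY]
    grind

theorem towerDist_le_of_move (h : Move n d u v) (q : Fin 3) :
    towerDist n u q ≤ towerDist n v q + 1 := by
  induction n generalizing q with
  | zero => exact absurd h.1 (Nat.not_lt_zero d)
  | succ n ih =>
    rcases Nat.lt_succ_iff_lt_or_eq.1 h.1 with hd | rfl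
    · have h' := h.restrict hd n.le_succ
      have ih_q := ih h' q
      have ih_third := ih h' (third (u n) q)
      rw [towerDist, towerDist, h.apply_of_lt hd n.lt_succ_self]
      split_ifs <;> omega
    · cases d with
      | zero =>
        rw [towerDist]
        split_ifs <;> simp [towerDist]
      | succ m => exact towerDist_le_of_top_move h q

theorem Move.lt_of_towerDist_eq (h : Move (n + 2) d u v)
    (hn : u n = q) (hn' : u (n + 1) = q)
    (hdist : towerDist (n + 2) v q + 1 = towerDist (n + 2) u q) : d < n := by
  rcases lt_trichotomy d n with hd | rfl | hd
  · exact hd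
  · exfalso
    rw [towerDist_succ_of_eq hn', towerDist_succ_of_eq hn] at hdist
    cases d with
    | zero => exact Nat.succ_ne_zero _ hdist
    | succ m =>
      obtain ⟨Y, Z, hXY, hXZ, hYZ, hu, hv_top, hv_m, -⟩ :=
        (h.restrict (by omega) (by omega)).top
      rw [hn] at hXY hXZ
      have hv : v (m + 2) = q := (h.apply_of_lt (by omega) (by omega)).trans hn'
      have hvY : fib (m + 1) ≤ towerDist (m + 1) v Y := fib_succ_le_towerDist (hv_m ▸ hYZ.symm)
      have hu_dist : towerDist (m + 1) u q = fib (m + 3) - 1 :=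
        towerDist_of_forall_eq_of_ne (fun j hj => hu j (by omega)) hXY.symm
      have hv_dist : towerDist (m + 3) v q =
          min (towerDist (m + 1) v Y + fib (m + 2)) (towerDist (m + 1) v q + fib (m + 3) + 1) := by
        rw [towerDist_succ_of_eq hv, towerDist_succ_of_ne (hv_top ▸ hXZ.symm), hv_top,
          third_eq hXZ.symm hYZ hXY.symm]
      have h3 : fib (m + 3) = fib (m + 1) + fib (m + 2) := Nat.fib_add_two
      rw [hu_dist, hv_dist] at hdist
      omega
  · obtain rfl : d = n + 1 := by have := h.1; omega
    obtain ⟨Y, Z, hXY, -, -, hu, -⟩ := h.top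
    exact (hXY (by rw [hn', ← hn, hu n le_rfl])).elim

end towerDist

def IsWalk (n len : ℕ) (s : ℕ → ℕ → Fin 3) : Prop :=
  ∀ i < len, ∃ d, Move n d (s i) (s (i + 1))

structure IsTransfer (n : ℕ) (p q : Fin 3) (len : ℕ) (s : ℕ → ℕ → Fin 3) : Prop where
  start : ∀ j < n, s 0 j = p
  finish : ∀ j < n, s len j = q
  walk : IsWalk n len s

section Transfer

variable {n len : ℕ} {s : ℕ → ℕ → Fin 3} {p q : Fin 3}

theorem IsWalk.towerDist_le (hs : IsWalk n len s) (q : Fin 3) {i i' : ℕ} (hii' : i ≤ i')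
    (hi' : i' ≤ len) : towerDist n (s i) q ≤ towerDist n (s i') q + (i' - i) := by
  induction i', hii' using Nat.le_induction with
  | base => omega
  | succ i' hii' ih =>
    obtain ⟨d, hd⟩ := hs i' hi'
    have := towerDist_le_of_move hd q
    have := ih (by omega)
    omega

theorem IsTransfer.le_length (hs : IsTransfer n p q len s) (hpq : p ≠ q) :
    fib (n + 2) - 1 ≤ len := by
  have := hs.walk.towerDist_le q (Nat.zero_le len) le_rfl
  rw [towerDist_of_forall_eq_of_ne hs.start hpq, towerDist_of_forall_eq hs.finish] at this
  omega

theorem IsTransfer.towerDist_eq (hs : IsTransfer n p q (fib (n + 2) - 1) s) (hpq : p ≠ q)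
    {i : ℕ} (hi : i ≤ fib (n + 2) - 1) : towerDist n (s i) q = fib (n + 2) - 1 - i := by
  have hstart := hs.walk.towerDist_le q (Nat.zero_le i) hi
  have hfinish := hs.walk.towerDist_le q hi le_rfl
  rw [towerDist_of_forall_eq_of_ne hs.start hpq] at hstart
  rw [towerDist_of_forall_eq hs.finish] at hfinish
  omega

theorem IsTransfer.glue {s₁ s₂ : ℕ → ℕ → Fin 3} {r : Fin 3}
    (hs₁ : IsTransfer (n + 1) p r (fib (n + 3) - 1) s₁)
    (hs₂ : IsTransfer n r q (fib (n + 2) - 1) s₂) (hpr : p ≠ r) (hpq : p ≠ q)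
    (hrq : r ≠ q) :
    IsTransfer (n + 2) p q (fib (n + 4) - 1) fun i j =>
      if i < fib (n + 3) then (if j = n + 1 then p else s₁ i j)
      else if j < n then s₂ (i - fib (n + 3)) j else q := by
  have h4 : fib (n + 4) = fib (n + 2) + fib (n + 3) := Nat.fib_add_two
  have h2 : 0 < fib (n + 2) := Nat.fib_pos.2 (by omega)
  have h3 : 0 < fib (n + 3) := Nat.fib_pos.2 (by omega)
  refine ⟨fun j hj => ?_, fun j hj => ?_, fun i hi => ?_⟩
  · rw [if_pos h3]
    split_ifs
    exacts [rfl, hs₁.start j (by omega)]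
  · rw [if_neg (show ¬ fib (n + 4) - 1 < fib (n + 3) by omega)]
    split_ifs with hjn
    · rw [show fib (n + 4) - 1 - fib (n + 3) = fib (n + 2) - 1 by omega]
      exact hs₂.finish j hjn
    · rfl
  · rcases lt_trichotomy (i + 1) (fib (n + 3)) with hi₁ | hi₁ | hi₁
    · obtain ⟨d, hd⟩ := hs₁.walk i (by omega)
      refine ⟨d, hd.extend (by omega) (fun j hj => ?_) (fun j hj => ?_) fun j hj hj' => ?_⟩
      · simp [show i < fib (n + 3) by omega, show j ≠ n + 1 by omega]
      · simp [hi₁, show j ≠ n + 1 by omega]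
      · simp [hi₁, show i < fib (n + 3) by omega, show j = n + 1 by omega]
    · obtain rfl : i = fib (n + 3) - 1 := by omega
      have hprev : fib (n + 3) - 1 < fib (n + 3) := by omega
      refine ⟨n + 1,
        Move.of_top (Y := r) (Z := q) ?_ ?_ hrq (fun j hj => ?_) ?_ ?_ fun j hj => ?_⟩
      · simpa [hprev] using hpr
      · simpa [hprev] using hpq
      · simpa [hprev, show j ≠ n + 1 by omega] using hs₁.finish j (by omega)
      · simp [hi₁]
      · simp [hi₁]
      · simpa [hi₁, hj] using hs₂.start j hj
    · obtain ⟨d, hd⟩ := hs₂.walk (i - fib (n + 3)) (by omega)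
      refine ⟨d, hd.extend (by omega) (fun j hj => ?_) (fun j hj => ?_) fun j hj hj' => ?_⟩
      · simp [show ¬ i < fib (n + 3) by omega, hj]
      · simp [show ¬ i + 1 < fib (n + 3) by omega, hj,
          show i + 1 - fib (n + 3) = i - fib (n + 3) + 1 by omega]
      · simp [show ¬ i + 1 < fib (n + 3) by omega, show ¬ i < fib (n + 3) by omega,
          show ¬ j < n by omega]

theorem exists_isTransfer : ∀ (n : ℕ) {p q : Fin 3}, p ≠ q →
    ∃ s, IsTransfer n p q (fib (n + 2) - 1) s
  | 0, p, _, _ => ⟨fun _ _ => p, fun _ => by omega, fun _ => by omega, fun _ => by simp⟩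
  | 1, p, q, hpq => by
    refine ⟨fun i _ => if i = 0 then p else q, fun _ _ => rfl, fun _ _ => rfl, fun i hi => ?_⟩
    obtain rfl : i = 0 := Nat.lt_one_iff.1 hi
    exact ⟨0, ⟨by omega, third p q, q, (third_ne_left hpq).symm, hpq, third_ne_right hpq,
      fun _ h => absurd h (Nat.not_lt_zero _), fun j hj => by simp [show j = 0 by omega]⟩⟩
  | n + 2, p, q, hpq => by
    obtain ⟨s₁, hs₁⟩ := exists_isTransfer (n + 1) (third_ne_left hpq).symm
    obtain ⟨s₂, hs₂⟩ := exists_isTransfer n (third_ne_right hpq)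
    exact ⟨_, hs₁.glue hs₂ (third_ne_left hpq).symm hpq (third_ne_right hpq)⟩

theorem IsWalk.exists_first_move_top (hs : IsWalk (n + 1) len s) (h₀ : s 0 n = p)
    (hlen : s len n ≠ p) :
    ∃ t < len, (∀ i ≤ t, s i n = p) ∧ IsWalk n t s ∧
      Move (n + 1) n (s t) (s (t + 1)) := by
  have hex : ∃ i, s i n ≠ p := ⟨len, hlen⟩
  have hpos : Nat.find hex ≠ 0 := fun h => Nat.find_spec hex (h ▸ h₀)
  have hbefore : ∀ i ≤ Nat.find hex - 1, s i n = p := fun i hi =>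
    not_not.1 (Nat.find_min hex (by omega))
  have hle : Nat.find hex ≤ len := Nat.find_min' hex hlen
  have hafter : s (Nat.find hex - 1 + 1) n ≠ p := by
    rw [Nat.sub_add_cancel (Nat.one_le_iff_ne_zero.2 hpos)]
    exact Nat.find_spec hex
  refine ⟨Nat.find hex - 1, by omega, hbefore, fun i hi => ?_, ?_⟩
  · obtain ⟨d, hd⟩ := hs i (by omega)
    have hdn : d ≠ n := by
      rintro rfl
      exact hd.apply_self_ne ((hbefore (i + 1) (by omega)).trans (hbefore i (by omega)).symm)
    exact ⟨d, hd.restrict (by have := hd.1; omega) n.le_succ⟩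
  · obtain ⟨d, hd⟩ := hs (Nat.find hex - 1) (by omega)
    obtain rfl : d = n := by
      by_contra hdn
      have hstay := hd.apply_of_lt (by have := hd.1; omega) n.lt_succ_self
      exact hafter (hstay.trans (hbefore _ le_rfl))
    exact hd

theorem IsTransfer.first_move_top (hs : IsTransfer (n + 2) p q (fib (n + 4) - 1) s)
    (hpq : p ≠ q) :
    IsTransfer (n + 1) p (third p q) (fib (n + 3) - 1) s ∧
      (∀ i < fib (n + 3), s i (n + 1) = p) ∧
      s (fib (n + 3)) (n + 1) = q ∧ s (fib (n + 3)) n = q ∧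
      ∀ j < n, s (fib (n + 3)) j = third p q := by
  have h4 : fib (n + 4) = fib (n + 2) + fib (n + 3) := Nat.fib_add_two
  have h3 : fib (n + 3) = fib (n + 1) + fib (n + 2) := Nat.fib_add_two
  have h1 : 0 < fib (n + 1) := Nat.fib_pos.2 n.succ_pos
  have h2 : 0 < fib (n + 2) := Nat.fib_pos.2 (by omega)
  obtain ⟨t, ht, htop, hwalk, hmove⟩ := hs.walk.exists_first_move_top
    (hs.start (n + 1) (by omega)) (by rw [hs.finish (n + 1) (by omega)]; exact hpq.symm)
  obtain ⟨Y, Z, hpY, hpZ, hYZ, hY, hZ_top, hZ_n, hbelow⟩ := hmove.top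
  rw [htop t le_rfl] at hpY hpZ
  have hY' : ∀ j < n + 1, s t j = Y := fun j hj => hY j (by omega)
  have hprefix : IsTransfer (n + 1) p Y t s := ⟨fun j hj => hs.start j (by omega), hY', hwalk⟩
  have ht_ge : fib (n + 3) - 1 ≤ t := hprefix.le_length hpY
  have hD : ∀ i ≤ fib (n + 4) - 1, towerDist (n + 2) (s i) q = fib (n + 4) - 1 - i :=
    fun i hi => hs.towerDist_eq hpq hi
  have hdist := hD t (by omega)
  rw [towerDist_succ_of_ne (htop t le_rfl ▸ hpq), htop t le_rfl] at hdist
  -- If the smaller disks were gathered on `q` first, the top disk would still need too many moves.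
  have hYq : Y ≠ q := by
    rintro rfl
    rw [towerDist_of_forall_eq_of_ne hY' (third_ne_right hpq).symm,
      towerDist_of_forall_eq hY'] at hdist
    grind
  obtain rfl : Y = third p q := (third_eq hpq hpY.symm hYq).symm
  rw [towerDist_of_forall_eq hY', towerDist_of_forall_eq_of_ne hY' hYq] at hdist
  obtain rfl : t = fib (n + 3) - 1 := by grind
  obtain rfl : Z = q := (third_eq hpY hpZ.symm hYZ.symm).symm.trans
    (third_eq hpY hpq.symm (third_ne_right hpq).symm)
  rw [Nat.sub_add_cancel (by omega)] at hZ_top hZ_n hbelow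
  exact ⟨hprefix, fun i hi => htop i (by omega), hZ_top, hZ_n, hbelow⟩

theorem IsTransfer.move_lt_of_minimal (hs : IsTransfer (n + 2) p q (fib (n + 4) - 1) s)
    (hpq : p ≠ q) {i d : ℕ} (hi : i < fib (n + 4) - 1) (hd : Move (n + 2) d (s i) (s (i + 1)))
    (hn : s i n = q) (hn' : s i (n + 1) = q) : d < n := by
  have hD : ∀ i ≤ fib (n + 4) - 1, towerDist (n + 2) (s i) q = fib (n + 4) - 1 - i :=
    fun i hi => hs.towerDist_eq hpq hi
  exact hd.lt_of_towerDist_eq hn hn' (by rw [hD i hi.le, hD (i + 1) hi]; omega)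

theorem IsTransfer.settled_of_minimal (hs : IsTransfer (n + 2) p q (fib (n + 4) - 1) s)
    (hpq : p ≠ q) {T i : ℕ} (hT : s T n = q ∧ s T (n + 1) = q) (hTi : T ≤ i)
    (hi : i ≤ fib (n + 4) - 1) : s i n = q ∧ s i (n + 1) = q := by
  induction i, hTi using Nat.le_induction with
  | base => exact hT
  | succ i hTi ih =>
    obtain ⟨d, hd⟩ := hs.walk i (by omega)
    obtain ⟨hn, hn'⟩ := ih (by omega)
    have hdn := hs.move_lt_of_minimal hpq (by omega) hd hn hn'
    exact ⟨(hd.apply_of_lt hdn (by omega)).trans hn,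
      (hd.apply_of_lt (by omega) (by omega)).trans hn'⟩

theorem IsTransfer.decompose (hs : IsTransfer (n + 2) p q (fib (n + 4) - 1) s) (hpq : p ≠ q) :
    IsTransfer (n + 1) p (third p q) (fib (n + 3) - 1) s ∧
      (∀ i < fib (n + 3), s i (n + 1) = p) ∧
      IsTransfer n (third p q) q (fib (n + 2) - 1) (fun i => s (fib (n + 3) + i)) ∧
      ∀ i, fib (n + 3) ≤ i → i ≤ fib (n + 4) - 1 → s i n = q ∧ s i (n + 1) = q := by
  have h4 : fib (n + 4) = fib (n + 2) + fib (n + 3) := Nat.fib_add_two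
  have h2 : 0 < fib (n + 2) := Nat.fib_pos.2 (by omega)
  obtain ⟨hprefix, htop, hq_top, hq_n, hr⟩ := hs.first_move_top hpq
  have hsettled :
      ∀ i, fib (n + 3) ≤ i → i ≤ fib (n + 4) - 1 → s i n = q ∧ s i (n + 1) = q :=
    fun i h h' => hs.settled_of_minimal hpq ⟨hq_n, hq_top⟩ h h'
  refine ⟨hprefix, htop, ⟨hr, fun j hj => ?_, fun i hi => ?_⟩, hsettled⟩
  · rw [show fib (n + 3) + (fib (n + 2) - 1) = fib (n + 4) - 1 by omega]
    exact hs.finish j (by omega)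
  · obtain ⟨d, hd⟩ := hs.walk (fib (n + 3) + i) (by omega)
    obtain ⟨hn, hn'⟩ := hsettled (fib (n + 3) + i) (by omega) (by omega)
    exact ⟨d, hd.restrict (hs.move_lt_of_minimal hpq (by omega) hd hn hn') (by omega)⟩

theorem IsTransfer.eq_of_minimal : ∀ {n : ℕ} {p q : Fin 3} {s s' : ℕ → ℕ → Fin 3},
    IsTransfer n p q (fib (n + 2) - 1) s → IsTransfer n p q (fib (n + 2) - 1) s' → p ≠ q →
    ∀ i ≤ fib (n + 2) - 1, ∀ j < n, s i j = s' i j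
  | 0, _, _, _, _, _, _, _, _, _, _, _ => by omega
  | 1, _, _, _, _, hs, hs', _, i, hi, j, hj => by
    obtain rfl | rfl : i = 0 ∨ i = 1 := by have : i ≤ 1 := hi; omega
    · exact (hs.start j hj).trans (hs'.start j hj).symm
    · exact (hs.finish j hj).trans (hs'.finish j hj).symm
  | n + 2, p, q, s, s', hs, hs', hpq, i, hi, j, hj => by
    obtain ⟨hpre, htop, hsuf, hsettled⟩ := hs.decompose hpq
    obtain ⟨hpre', htop', hsuf', hsettled'⟩ := hs'.decompose hpq
    have hi' : i ≤ fib (n + 4) - 1 := hi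
    by_cases hit : i < fib (n + 3)
    · rcases Nat.lt_succ_iff_lt_or_eq.1 hj with hj | rfl
      · exact hpre.eq_of_minimal hpre' (third_ne_left hpq).symm i
          (show i ≤ fib (n + 3) - 1 by omega) j hj
      · exact (htop i hit).trans (htop' i hit).symm
    · obtain ⟨k, rfl⟩ : ∃ k, i = fib (n + 3) + k := ⟨i - fib (n + 3), by omega⟩
      have h4 : fib (n + 4) = fib (n + 2) + fib (n + 3) := Nat.fib_add_two
      rcases lt_or_ge j n with hjn | hjn
      · exact hsuf.eq_of_minimal hsuf' (third_ne_right hpq) k (by omega) j hjn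
      · obtain ⟨hn, hn'⟩ := hsettled _ (by omega) hi'
        obtain ⟨hn₂, hn₂'⟩ := hsettled' _ (by omega) hi'
        obtain rfl | rfl : j = n ∨ j = n + 1 := by omega
        exacts [hn.trans hn₂.symm, hn'.trans hn₂'.symm]

end Transfer

def ofFin {n : ℕ} (σ : Fin n → Fin 3) : ℕ → Fin 3 :=
  fun j => if h : j < n then σ ⟨j, h⟩ else 0

theorem ofFin_apply {n : ℕ} (σ : Fin n → Fin 3) (i : Fin n) : ofFin σ i = σ i := by
  simp [ofFin]

theorem Move.toFibMove {n d : ℕ} {u v : ℕ → Fin 3} (h : Move n d u v) :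
    FibMove n (d + 1) (fun i => u i) (fun i => v i) := by
  obtain ⟨hd, Y, Z, hdY, hdZ, hYZ, hbelow, hmoved⟩ := h
  refine ⟨by omega, hd, u d, Y, Z, hdY, hYZ, hdZ, fun i hi => ?_, fun i hi => ?_,
    fun i hi => hbelow i (by omega), fun i hi => ?_, fun i hi hi' => ?_⟩
  · dsimp only
    rw [show (i : ℕ) = d by omega]
  · dsimp only
    rw [hbelow i (by omega)]
    exact hdY.symm
  · dsimp only
    rw [hmoved i i.isLt, if_pos (by omega)]
  · dsimp only
    rw [hmoved i i.isLt, if_neg (by omega)]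

theorem IsTransfer.isSolution {n m : ℕ} {s : ℕ → ℕ → Fin 3} (h : IsTransfer n 0 2 m s) :
    IsSolution n m fun i v => s i v := by
  refine ⟨funext fun v => h.start v v.isLt, funext fun v => h.finish v v.isLt, fun i hi => ?_⟩
  obtain ⟨d, hd⟩ := h.walk i hi
  exact ⟨d + 1, hd.toFibMove⟩

end HanoiFibonacci

open HanoiFibonacci

theorem FibMove.toMove {n k : ℕ} {σ σ' : Fin n → Fin 3} (h : FibMove n k σ σ') :
    Move n (k - 1) (ofFin σ) (ofFin σ') := by
  obtain ⟨hk, hkn, X, Y, Z, hXY, hYZ, hXZ, hX, -, hY, hZ, hframe⟩ := h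
  have hX' : ofFin σ (k - 1) = X := by
    simpa [ofFin, show k - 1 < n by omega] using hX ⟨k - 1, by omega⟩ (by simp; omega)
  refine ⟨by omega, Y, Z, hX' ▸ hXY, hX' ▸ hXZ, hYZ, fun j hj => ?_, fun j hj => ?_⟩
  · simpa [ofFin, show j < n by omega] using hY ⟨j, by omega⟩ (by simp; omega)
  · simp only [ofFin, dif_pos hj]
    split_ifs with hjk
    · exact hZ ⟨j, hj⟩ (by simp; omega)
    · exact hframe ⟨j, hj⟩ (by simp; omega) (by simp; omega)

theorem IsSolution.isTransfer {n m : ℕ} {s : ℕ → Fin n → Fin 3} (h : IsSolution n m s) :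
    IsTransfer n 0 2 m fun i => ofFin (s i) := by
  obtain ⟨h₀, hm, hmove⟩ := h
  refine ⟨fun j hj => by simp [ofFin, hj, h₀], fun j hj => by simp [ofFin, hj, hm],
    fun i hi => ?_⟩
  obtain ⟨k, hk⟩ := hmove i hi
  exact ⟨k - 1, hk.toMove⟩

/-- For every `n ≥ 0`, the Tower of Hanoi-Fibonacci with `n` disks
has exactly one solution of the minimal length `F (n+2) - 1`. -/
theorem hanoiFibonacci_unique_optimal_solution (n : ℕ) :
    (∀ m s, IsSolution n m s → Nat.fib (n + 2) - 1 ≤ m) ∧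
    ∃ s, IsSolution n (Nat.fib (n + 2) - 1) s ∧
      ∀ s', IsSolution n (Nat.fib (n + 2) - 1) s' →
        ∀ i ≤ Nat.fib (n + 2) - 1, s' i = s i := by
  obtain ⟨s, hs⟩ := exists_isTransfer n (p := 0) (q := 2) (by decide)
  refine ⟨fun m s' hs' => hs'.isTransfer.le_length (by decide), fun i v => s i v, hs.isSolution,
    fun s' hs' i hi => funext fun v => ?_⟩
  rw [← ofFin_apply (s' i)]
  exact hs'.isTransfer.eq_of_minimal hs (by decide) i hi v v.isLt
end

section
/- For every n ≥ 2, the optimal solution s_0, s_1, …, s_{F_{n+2}−1} of the Tower of Hanoi-Fibonacci with n disks satisfies: s_{F_{n+1}−1} is the state with disk n on peg A and disks 1,…,n−1 on peg B, and s_{F_{n+1}} is the state with disks 1,…,n−2 on peg B and disks n−1 and n on peg C; in particular the F_{n+1}-th move is the unique n-Fibonacci move of the solution. -/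
theorem FibMove.le_of_not_top {n k : ℕ} {σ τ : Fin (n + 1) → Fin 3}
    (h : FibMove (n + 1) k σ τ) (htop : ¬FibMove (n + 1) (n + 1) σ τ) : k ≤ n := by
  rcases h.2.1.lt_or_eq with hk | rfl
  · omega
  · exact absurd h htop

theorem FibMove.apply_last_of_le {n k : ℕ} {σ τ : Fin (n + 1) → Fin 3}
    (h : FibMove (n + 1) k σ τ) (hk : k ≤ n) : τ (Fin.last n) = σ (Fin.last n) := by
  obtain ⟨-, -, -, -, -, -, -, -, -, -, -, -, hkeep⟩ := h
  exact hkeep _ (by simp; omega) (by simp; omega)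

theorem FibMove.init {n k : ℕ} {σ τ : Fin (n + 1) → Fin 3} (h : FibMove (n + 1) k σ τ)
    (hk : k ≤ n) : FibMove n k (Fin.init σ) (Fin.init τ) := by
  obtain ⟨hk1, -, X, Y, Z, hXY, hYZ, hXZ, hX, hXne, hY, hZ, hkeep⟩ := h
  exact ⟨hk1, hk, X, Y, Z, hXY, hYZ, hXZ,
    fun i hi => hX i.castSucc hi, fun i hi => hXne i.castSucc hi, fun i hi => hY i.castSucc hi,
    fun i hi => hZ i.castSucc hi, fun i h₁ h₂ => hkeep i.castSucc h₁ h₂⟩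

theorem FibMove.eq_ite_of_top {n : ℕ} {σ τ : Fin n → Fin 3} (h : FibMove n n σ τ) :
    ∃ X Y W : Fin 3, X ≠ Y ∧ Y ≠ W ∧ X ≠ W ∧
      σ = (fun i : Fin n => if (i : ℕ) + 1 = n then X else Y) ∧
      τ = (fun i : Fin n => if (i : ℕ) + 1 = n ∨ (i : ℕ) + 2 = n then W else Y) := by
  obtain ⟨-, -, X, Y, W, hXY, hYW, hXW, hX, -, hY, hW, hkeep⟩ := h
  refine ⟨X, Y, W, hXY, hYW, hXW, funext fun i => ?_, funext fun i => ?_⟩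
  · split_ifs with hi
    · exact hX i hi
    · exact hY i (by omega)
  · split_ifs with hi
    · exact hW i hi
    · obtain ⟨hi₁, hi₂⟩ := not_or.mp hi
      exact (hkeep i hi₁ hi₂).trans (hY i (by omega))

def IsMoveSeq (n m : ℕ) (s : ℕ → Fin n → Fin 3) : Prop :=
  ∀ i < m, ∃ k, FibMove n k (s i) (s (i + 1))

theorem IsMoveSeq.mono {n m t : ℕ} {s : ℕ → Fin n → Fin 3} (hs : IsMoveSeq n m s)
    (ht : t ≤ m) : IsMoveSeq n t s :=
  fun i hi => hs i (by omega)

theorem IsMoveSeq.shift {n m : ℕ} {s : ℕ → Fin n → Fin 3} (hs : IsMoveSeq n m s) (t : ℕ) :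
    IsMoveSeq n (m - t) (fun j => s (t + j)) :=
  fun i hi => hs (t + i) (by omega)

section NoTopMove

variable {n m : ℕ} {s : ℕ → Fin (n + 1) → Fin 3}

theorem IsMoveSeq.init (hs : IsMoveSeq (n + 1) m s)
    (hlow : ∀ j < m, ¬FibMove (n + 1) (n + 1) (s j) (s (j + 1))) :
    IsMoveSeq n m (fun j => Fin.init (s j)) := fun j hj =>
  let ⟨k, hk⟩ := hs j hj
  ⟨k, hk.init (hk.le_of_not_top (hlow j hj))⟩

theorem IsMoveSeq.apply_last_eq (hs : IsMoveSeq (n + 1) m s)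
    (hlow : ∀ j < m, ¬FibMove (n + 1) (n + 1) (s j) (s (j + 1))) :
    s m (Fin.last n) = s 0 (Fin.last n) := by
  induction m with
  | zero => rfl
  | succ m ih =>
    obtain ⟨k, hk⟩ := hs m (by omega)
    rw [hk.apply_last_of_le (hk.le_of_not_top (hlow m (by omega))),
      ih (hs.mono (by omega)) fun j hj => hlow j (by omega)]

end NoTopMove

theorem Nat.exists_first_of_exists_lt {p : ℕ → Prop} {m : ℕ} (h : ∃ t < m, p t) :
    ∃ t < m, p t ∧ ∀ j < t, ¬p j := by
  classical
  obtain ⟨t, htm, ht⟩ := h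
  exact ⟨Nat.find ⟨t, ht⟩, (Nat.find_min' _ ht).trans_lt htm, Nat.find_spec _,
    fun _ => Nat.find_min _⟩

open Finset

/-- If disk `n + 1` is not on `Z`, it has to move: first disks `1,…,n` gather on a peg
`Y ≠ σ (Fin.last n)` (at least `moveBound n (Fin.init σ) Y` moves), then disks `n, n + 1` move
together, and afterwards at least `F (n + 1) - 1` further moves are needed; hence the summand
`F (n + 1)`. -/
def moveBound : (n : ℕ) → (Fin n → Fin 3) → Fin 3 → ℕ
  | 0, _, _ => 0
  | n + 1, σ, Z =>
    if σ (Fin.last n) = Z then moveBound n (Fin.init σ) Z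
    else Nat.fib (n + 1) +
      (univ.erase (σ (Fin.last n))).inf' univ_nontrivial.erase_nonempty
        (moveBound n (Fin.init σ))

theorem moveBound_le (n : ℕ) (σ : Fin n → Fin 3) (Z : Fin 3) :
    moveBound n σ Z ≤ Nat.fib (n + 2) - 1 := by
  induction n generalizing Z with
  | zero => simp [moveBound]
  | succ n ih =>
    have hfib : Nat.fib (n + 1 + 2) = Nat.fib (n + 1) + Nat.fib (n + 2) := Nat.fib_add_two
    have hpos : 0 < Nat.fib (n + 2) := Nat.fib_pos.mpr (by omega)
    rw [moveBound]
    split_ifs with h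
    · have := ih (Fin.init σ) Z
      omega
    · obtain ⟨Y, hY⟩ := (univ_nontrivial (α := Fin 3)).erase_nonempty (a := σ (Fin.last n))
      have := inf'_le (moveBound n (Fin.init σ)) hY
      have := ih (Fin.init σ) Y
      omega

theorem fib_sub_one_le_moveBound_const (n : ℕ) {Y Z : Fin 3} (h : Y ≠ Z) :
    Nat.fib (n + 2) - 1 ≤ moveBound n (fun _ => Y) Z := by
  induction n generalizing Z with
  | zero => simp
  | succ n ih =>
    have hfib : Nat.fib (n + 1 + 2) = Nat.fib (n + 1) + Nat.fib (n + 2) := Nat.fib_add_two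
    rw [moveBound, if_neg h]
    refine le_trans ?_ <| Nat.add_le_add_left
      (le_inf' _ _ fun Y' hY' => ih (Ne.symm (ne_of_mem_erase hY'))) _
    omega

theorem fib_le_moveBound_of_apply_last_ne {n : ℕ} {σ : Fin (n + 1) → Fin 3} {Z : Fin 3}
    (h : σ (Fin.last n) ≠ Z) : Nat.fib (n + 1) ≤ moveBound (n + 1) σ Z := by
  rw [moveBound, if_neg h]
  exact Nat.le_add_right _ _

theorem fib_add_two_le_moveBound_of_fibMove_top {n : ℕ} {σ τ : Fin (n + 1) → Fin 3}
    {Z : Fin 3} (hmove : FibMove (n + 1) (n + 1) σ τ) (hZ : τ (Fin.last n) ≠ Z) :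
    Nat.fib (n + 2) ≤ moveBound (n + 1) τ Z := by
  rw [moveBound, if_neg hZ]
  cases n with
  | zero => exact Nat.le_add_right _ _
  | succ n =>
    obtain ⟨-, -, -, -, W, -, -, -, -, -, -, hW, -⟩ := hmove
    have hlast : Fin.init τ (Fin.last n) = τ (Fin.last (n + 1)) :=
      (hW _ (Or.inr (by simp))).trans (hW _ (Or.inl (by simp))).symm
    have hfib : Nat.fib (n + 1 + 2) = Nat.fib (n + 1) + Nat.fib (n + 1 + 1) := Nat.fib_add_two
    refine le_trans ?_ <| Nat.add_le_add_left (le_inf' _ _ fun Y hY =>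
      fib_le_moveBound_of_apply_last_ne (hlast ▸ (ne_of_mem_erase hY).symm)) _
    omega

theorem fib_sub_one_le_moveBound_of_fibMove_top {n : ℕ} {σ τ : Fin (n + 1) → Fin 3}
    (Z : Fin 3) (hmove : FibMove (n + 1) (n + 1) σ τ) :
    Nat.fib (n + 1) - 1 ≤ moveBound (n + 1) τ Z := by
  by_cases hZ : τ (Fin.last n) = Z
  · cases n with
    | zero => simp
    | succ n =>
      obtain ⟨-, -, -, Y, W, -, hYW, -, -, -, hY, hW, hkeep⟩ := hmove
      have hWZ : W = Z := (hW _ (Or.inl (by simp))).symm.trans hZ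
      have hlast : Fin.init τ (Fin.last n) = Z := (hW _ (Or.inr (by simp))).trans hWZ
      have hrest : Fin.init (Fin.init τ) = fun _ => Y := funext fun i =>
        (hkeep _ (by simp; omega) (by simp; omega)).trans (hY _ (by simp))
      rw [moveBound, if_pos hZ, moveBound, if_pos hlast, hrest]
      exact fib_sub_one_le_moveBound_const n (hWZ ▸ hYW)
  · have := fib_add_two_le_moveBound_of_fibMove_top hmove hZ
    have := Nat.fib_mono (show n + 1 ≤ n + 2 by omega)
    omega

theorem moveBound_le_add_of_fibMove_top {n : ℕ} {ρ σ τ : Fin (n + 1) → Fin 3} {Y : Fin 3}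
    (Z : Fin 3) (hmove : FibMove (n + 1) (n + 1) σ τ) (hρ : ρ (Fin.last n) = σ (Fin.last n))
    (hY : Y ≠ σ (Fin.last n)) :
    moveBound (n + 1) ρ Z ≤ moveBound n (Fin.init ρ) Y + 1 + moveBound (n + 1) τ Z := by
  have hτ : τ (Fin.last n) ≠ σ (Fin.last n) := by
    obtain ⟨-, -, X, -, W, -, -, hXW, hX, -, -, hW, -⟩ := hmove
    rw [hX _ (by simp), hW _ (Or.inl (by simp))]
    exact hXW.symm
  rw [moveBound]
  split_ifs with hZ
  · have := moveBound_le n (Fin.init ρ) Z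
    have := fib_add_two_le_moveBound_of_fibMove_top hmove (hZ ▸ hρ ▸ hτ)
    omega
  · have := inf'_le (moveBound n (Fin.init ρ)) (mem_erase.mpr ⟨hρ ▸ hY, mem_univ Y⟩)
    have := fib_sub_one_le_moveBound_of_fibMove_top Z hmove
    omega

theorem moveBound_le_of_isMoveSeq {n m : ℕ} {s : ℕ → Fin n → Fin 3} {Z : Fin 3}
    (hs : IsMoveSeq n m s) (hend : s m = fun _ => Z) : moveBound n (s 0) Z ≤ m := by
  induction n generalizing m Z with
  | zero => simp [moveBound]
  | succ n ihn =>
    induction m using Nat.strong_induction_on generalizing s Z with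
    | _ m ihm =>
    by_cases htop : ∃ t < m, FibMove (n + 1) (n + 1) (s t) (s (t + 1))
    · obtain ⟨t, htm, hmove, hfirst⟩ := Nat.exists_first_of_exists_lt htop
      obtain ⟨-, -, X, Y, -, hXY, -, -, hX, -, hY, -, -⟩ := id hmove
      have hpre : moveBound n (Fin.init (s 0)) Y ≤ t :=
        ihn ((hs.mono htm.le).init hfirst) (funext fun i => hY _ (by simp))
      have hsuf : moveBound (n + 1) (s (t + 1)) Z ≤ m - (t + 1) :=
        ihm _ (by omega) (hs.shift (t + 1)) (by simp only [Nat.add_sub_cancel' htm, hend])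
      calc moveBound (n + 1) (s 0) Z
          ≤ moveBound n (Fin.init (s 0)) Y + 1 + moveBound (n + 1) (s (t + 1)) Z :=
            moveBound_le_add_of_fibMove_top Z hmove
              ((hs.mono htm.le).apply_last_eq hfirst).symm (hX (Fin.last n) (by simp) ▸ hXY.symm)
        _ ≤ m := by omega
    · have hlow : ∀ j < m, ¬FibMove (n + 1) (n + 1) (s j) (s (j + 1)) :=
        fun j hj hj' => htop ⟨j, hj, hj'⟩
      have hlast : s 0 (Fin.last n) = Z := by rw [← hs.apply_last_eq hlow, hend]
      rw [moveBound, if_pos hlast]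
      exact ihn (hs.init hlow) (by rw [hend]; rfl)

theorem IsMoveSeq.add_moveBound_le {n m j : ℕ} {s : ℕ → Fin n → Fin 3} {Z : Fin 3}
    (hs : IsMoveSeq n m s) (hend : s m = fun _ => Z) (hj : j < m) :
    j + 1 + moveBound n (s (j + 1)) Z ≤ m := by
  have := moveBound_le_of_isMoveSeq (Z := Z) (hs.shift (j + 1))
    (by simp only [Nat.add_sub_cancel' hj, hend])
  simp only [add_zero] at this
  omega

/-- For `n ≥ 2`, the optimal solution `s 0, …, s (F (n+2) - 1)` of the
Tower of Hanoi-Fibonacci with `n` disks satisfies: `s (F (n+1) - 1)` is the state with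
disk `n` on peg `A` and disks `1,…,n-1` on peg `B`, and `s (F (n+1))` is the state with
disks `1,…,n-2` on peg `B` and disks `n-1, n` on peg `C`; in particular the `F (n+1)`-th
move is the unique `n`-Fibonacci move of the solution. -/
theorem hanoiFibonacci_middle_states (n : ℕ) (hn : 2 ≤ n)
    (s : ℕ → (Fin n → Fin 3)) (hs : IsSolution n (Nat.fib (n + 2) - 1) s) :
    (s (Nat.fib (n + 1) - 1) =
      fun i : Fin n => if (i : ℕ) + 1 = n then (0 : Fin 3) else 1) ∧
    (s (Nat.fib (n + 1)) =
      fun i : Fin n => if (i : ℕ) + 1 = n ∨ (i : ℕ) + 2 = n then (2 : Fin 3) else 1) ∧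
    FibMove n n (s (Nat.fib (n + 1) - 1)) (s (Nat.fib (n + 1))) ∧
    ∀ j < Nat.fib (n + 2) - 1, FibMove n n (s j) (s (j + 1)) → j = Nat.fib (n + 1) - 1 := by
  obtain ⟨n, rfl⟩ : ∃ n', n = n' + 1 := ⟨n - 1, by omega⟩
  obtain ⟨h0, hend, hs⟩ : _ ∧ _ ∧ IsMoveSeq (n + 1) _ s := hs
  have htop : ∃ t < Nat.fib (n + 1 + 2) - 1, FibMove (n + 1) (n + 1) (s t) (s (t + 1)) := by
    by_contra! hlow
    simpa [hend, h0] using hs.apply_last_eq hlow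
  obtain ⟨t, htm, hmove, hfirst⟩ := Nat.exists_first_of_exists_lt htop
  obtain ⟨X, Y, W, hXY, hYW, -, hσ, hτ⟩ := hmove.eq_ite_of_top
  obtain rfl : X = 0 := by simpa [hσ, h0] using (hs.mono htm.le).apply_last_eq hfirst
  have hpre : Nat.fib (n + 1 + 1) - 1 ≤ t := calc
    _ ≤ moveBound n (fun _ => 0) Y := fib_sub_one_le_moveBound_const n hXY
    _ = moveBound n (Fin.init (s 0)) Y := by rw [h0]; rfl
    _ ≤ t := moveBound_le_of_isMoveSeq ((hs.mono htm.le).init hfirst)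
      (by rw [hσ]; funext i; simp [Fin.init]; omega)
  have hsuf := hs.add_moveBound_le hend htm
  have hfib : Nat.fib (n + 1 + 2) = Nat.fib (n + 1) + Nat.fib (n + 1 + 1) := Nat.fib_add_two
  have hmono : Nat.fib (n + 1) ≤ Nat.fib (n + 1 + 1) := Nat.fib_le_fib_succ
  obtain rfl : W = 2 := by
    by_contra hW
    have : Nat.fib (n + 1 + 1) ≤ moveBound (n + 1) (s (t + 1)) 2 :=
      fib_add_two_le_moveBound_of_fibMove_top hmove (by rw [hτ]; simpa using hW)
    omega
  obtain rfl : Y = 1 := (by decide : ∀ Y : Fin 3, 0 ≠ Y → Y ≠ 2 → Y = 1) Y hXY hYW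
  have := fib_sub_one_le_moveBound_of_fibMove_top 2 hmove
  rw [show Nat.fib (n + 1 + 1) = t + 1 by omega, Nat.add_sub_cancel]
  refine ⟨hσ, hτ, hmove, fun j hj hjmove => ?_⟩
  have := hs.add_moveBound_le hend hj
  have := fib_sub_one_le_moveBound_of_fibMove_top 2 hjmove
  have := not_lt.mp fun hjt => hfirst j hjt hjmove
  omega
end

section
/- Let 0 < k ≤ n be integers. In the optimal solution of the Tower of Hanoi-Fibonacci with n disks, the number of k-Fibonacci moves equals F_{n+1−k}. -/
namespace HanoiFibonacci

open Nat Finset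

/-- The third peg when `a ≠ b`, since `0 + 1 + 2 = 0` in `Fin 3`. -/
def otherPeg (a b : Fin 3) : Fin 3 := -(a + b)

@[simp] theorem otherPeg_eq_left_iff : ∀ {a b : Fin 3}, otherPeg a b = a ↔ a = b := by decide

@[simp] theorem otherPeg_eq_right_iff : ∀ {a b : Fin 3}, otherPeg a b = b ↔ a = b := by decide

@[simp] theorem left_eq_otherPeg_iff {a b : Fin 3} : a = otherPeg a b ↔ a = b := by
  rw [eq_comm, otherPeg_eq_left_iff]

@[simp] theorem right_eq_otherPeg_iff {a b : Fin 3} : b = otherPeg a b ↔ a = b := by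
  rw [eq_comm, otherPeg_eq_right_iff]

@[simp] theorem otherPeg_otherPeg_right (a b : Fin 3) : otherPeg a (otherPeg a b) = b := by
  simp [otherPeg]

@[simp] theorem otherPeg_otherPeg_left (a b : Fin 3) : otherPeg (otherPeg a b) b = a := by
  simp [otherPeg]

theorem eq_otherPeg : ∀ {a b c : Fin 3}, a ≠ b → b ≠ c → a ≠ c → c = otherPeg a b := by decide

theorem eq_or_eq_or_eq_otherPeg :
    ∀ {a b : Fin 3}, a ≠ b → ∀ c, c = a ∨ c = b ∨ c = otherPeg a b := by
  decide

/-- `potential f m c` is the potential, relative to the target peg `c`, of a window of `m`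
consecutive disks, the `t`-th smallest of which lies on `f t`. When the largest one is not on `c`,
the first term of the `min` counts moving it once, onto `c`: the smaller disks must first gather
on the third peg, and all but the one carried along must then follow. The second term is a
relaxation without which the potential could increase under moves of larger disks. -/
def potential (f : ℕ → Fin 3) : ℕ → Fin 3 → ℕ
  | 0, _ => 0
  | 1, c => if f 0 = c then 0 else 1
  | m + 2, c =>
    if f (m + 1) = c then potential f (m + 1) c
    else min (potential f (m + 1) (otherPeg (f (m + 1)) c) + fib m)
      (potential f (m + 1) c + fib (m + 1))

variable {f g : ℕ → Fin 3}

theorem potential_congr {m : ℕ} (h : ∀ t < m, f t = g t) (c : Fin 3) :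
    potential f m c = potential g m c := by
  induction m generalizing c with
  | zero => rfl
  | succ m ih =>
    rcases m with _ | m
    · simp [potential, h 0 one_pos]
    · simp only [potential, h (m + 1) (by omega), ih fun t ht => h t (by omega)]

theorem potential_of_forall_eq {m : ℕ} {a : Fin 3} (h : ∀ t < m, f t = a) (c : Fin 3) :
    potential f m c = if a = c then 0 else fib m := by
  induction m generalizing c with
  | zero => simp [potential]
  | succ m ih =>
    rcases m with _ | m
    · simp [potential, h 0 one_pos]
    · have ih := ih fun t ht => h t (by omega)
      rw [potential, h (m + 1) (by omega), ih, ih]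
      by_cases hac : a = c
      · simp [hac]
      · simp only [hac, left_eq_otherPeg_iff, if_false, fib_add_two]
        have := @fib_le_fib_succ m
        omega

theorem potential_le_of_eq_above {m a : ℕ}
    (hle : ∀ c, potential f (m + 1) c ≤ potential g (m + 1) c + a)
    (heq : ∀ t, m < t → f t = g t) {l : ℕ} (hl : m < l) (c : Fin 3) :
    potential f l c ≤ potential g l c + a := by
  induction l, hl using Nat.le_induction generalizing c with
  | base => exact hle c
  | succ l hl ih =>
    obtain ⟨l, rfl⟩ : ∃ l', l = l' + 1 := ⟨l - 1, by omega⟩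
    rw [potential, potential, heq _ (by omega)]
    split_ifs
    · exact ih c
    · have := ih c
      have := ih (otherPeg (g (l + 1)) c)
      omega

theorem potential_le_add_one_of_eq_of_pos (h : ∀ t, 0 < t → f t = g t) (m : ℕ) (c : Fin 3) :
    potential f m c ≤ potential g m c + 1 := by
  rcases m with _ | m
  · simp [potential]
  · refine potential_le_of_eq_above (m := 0) (fun c => ?_) h (by omega) c
    simp only [potential]
    split_ifs <;> simp

theorem potential_of_top {a b : Fin 3} {d : ℕ} (hab : a ≠ b) (hbelow : ∀ t < d + 1, f t = b)
    (htop : f (d + 1) = a) (c : Fin 3) :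
    potential f (d + 2) c = if c = otherPeg a b then fib d else fib (d + 1) := by
  have hc := potential_of_forall_eq hbelow
  have := @fib_le_fib_succ d
  rw [potential, htop, hc, hc]
  obtain rfl | rfl | rfl := eq_or_eq_or_eq_otherPeg hab c <;> simp [hab, hab.symm]
  omega

theorem potential_le_of_move_top {a b : Fin 3} {d : ℕ} (hab : a ≠ b)
    (hbelow : ∀ t < d + 1, f t = b) (htop : f (d + 1) = a) (hgbelow : ∀ t < d, g t = b)
    (hgd : g d = otherPeg a b) (hgtop : g (d + 1) = otherPeg a b) (c : Fin 3) :
    potential f (d + 2) c ≤ potential g (d + 2) c := by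
  rw [potential_of_top hab hbelow htop]
  rcases d with _ | d
  · rw [potential_of_forall_eq (a := otherPeg a b) (fun t ht => by
      interval_cases t <;> assumption)]
    by_cases hc : c = otherPeg a b <;> simp [hc, eq_comm]
  · have hg := potential_of_top (by simpa using hab) hgbelow hgd
    rw [otherPeg_otherPeg_left] at hg
    have := @fib_le_fib_succ d
    rw [potential, hgtop, hg, hg]
    obtain hc | hc | hc := eq_or_eq_or_eq_otherPeg hab c <;> rw [hc] <;>
      simp [hab, hab.symm, fib_add_two]
    all_goals omega

theorem potential_le_of_move {a b : Fin 3} {d l : ℕ} (hab : a ≠ b)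
    (hbelow : ∀ t < d + 1, f t = b) (htop : f (d + 1) = a) (hgd : g d = otherPeg a b)
    (hgtop : g (d + 1) = otherPeg a b) (hrest : ∀ t, t ≠ d → t ≠ d + 1 → g t = f t)
    (hl : d + 1 < l) (c : Fin 3) :
    potential f l c ≤ potential g l c := by
  have hgbelow : ∀ t < d, g t = b := fun t ht => (hrest t (by omega) (by omega)).trans
    (hbelow t (by omega))
  simpa using potential_le_of_eq_above (m := d + 1) (a := 0)
    (fun c => potential_le_of_move_top hab hbelow htop hgbelow hgd hgtop c)
    (fun t ht => (hrest t (by omega) (by omega)).symm) hl c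

variable {n : ℕ}

/-- Disk `i + 1` lies on `pegOf s i`; indices `i ≥ n` get the junk peg `0`. -/
def pegOf (s : Fin n → Fin 3) (i : ℕ) : Fin 3 := if h : i < n then s ⟨i, h⟩ else 0

theorem FibMove.exists_pegOf {k : ℕ} {s s' : Fin n → Fin 3} (h : FibMove n k s s') :
    1 ≤ k ∧ k ≤ n ∧ ∃ a b, a ≠ b ∧ pegOf s (k - 1) = a ∧ (∀ t < k - 1, pegOf s t = b) ∧
      (∀ t, t + 1 = k ∨ t + 2 = k → pegOf s' t = otherPeg a b) ∧
      ∀ t, t + 1 ≠ k → t + 2 ≠ k → pegOf s' t = pegOf s t := by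
  obtain ⟨hk, hkn, a, b, c, hab, hbc, hac, hsk, -, hsb, hs'c, hs'⟩ := h
  obtain rfl := eq_otherPeg hab hbc hac
  refine ⟨hk, hkn, a, b, hab, ?_, fun t ht => ?_, fun t ht => ?_, fun t ht ht' => ?_⟩
  · simp [pegOf, show k - 1 < n by omega, hsk ⟨k - 1, by omega⟩ (by simp; omega)]
  · simp [pegOf, show t < n by omega, hsb ⟨t, _⟩ (show t + 1 < k by omega)]
  · simp [pegOf, show t < n by omega, hs'c ⟨t, _⟩ ht]
  · unfold pegOf
    split_ifs with htn
    · exact hs' ⟨t, htn⟩ ht ht'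
    · rfl

theorem FibMove.unique {j k : ℕ} {s s' : Fin n → Fin 3} (hj : FibMove n j s s')
    (hk : FibMove n k s s') : j = k := by
  have key {j k : ℕ} (hj : FibMove n j s s') (hk : FibMove n k s s') :
      j = k ∨ j + 1 = k := by
    obtain ⟨hj1, -, a, b, hab, hja, -, hjmoved, -⟩ := FibMove.exists_pegOf hj
    obtain ⟨-, -, -, -, -, -, -, -, hkfixed⟩ := FibMove.exists_pegOf hk
    by_contra! hne
    have := hkfixed (j - 1) (by omega) (by omega)
    rw [hjmoved (j - 1) (by omega), hja] at this
    simp [hab] at this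
  have := key hj hk
  have := key hk hj
  omega

def diskPotential (k : ℕ) (s : Fin n → Fin 3) : ℕ :=
  potential (fun t => pegOf s (k - 1 + t)) (n + 1 - k) 2

theorem diskPotential_const {k : ℕ} (hk : 1 ≤ k) (a : Fin 3) :
    diskPotential k (fun _ : Fin n => a) = if a = 2 then 0 else fib (n + 1 - k) :=
  potential_of_forall_eq (fun t ht => by simp [pegOf, show k - 1 + t < n by omega]) 2

theorem diskPotential_le_of_fibMove {j k : ℕ} {s s' : Fin n → Fin 3} (hk : 1 ≤ k)
    (h : FibMove n j s s') : diskPotential k s ≤ diskPotential k s' + if j = k then 1 else 0 := by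
  obtain ⟨hj, hjn, a, b, hab, hja, hjb, hmoved, hfixed⟩ := FibMove.exists_pegOf h
  unfold diskPotential
  rcases lt_trichotomy j k with hjk | rfl | hjk
  · rw [potential_congr (fun t _ => (hfixed (k - 1 + t) (by omega) (by omega)).symm)]
    exact Nat.le_add_right _ _
  · rw [if_pos rfl]
    exact potential_le_add_one_of_eq_of_pos
      (fun t ht => (hfixed (j - 1 + t) (by omega) (by omega)).symm) _ _
  · refine (potential_le_of_move (f := fun t => pegOf s (k - 1 + t))
      (g := fun t => pegOf s' (k - 1 + t)) (d := j - k - 1) hab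
      (fun t ht => hjb _ (by omega)) ?_ (hmoved _ (by omega)) (hmoved _ (by omega))
      (fun t ht ht' => hfixed _ (by omega) (by omega)) (by omega) 2).trans (Nat.le_add_right _ _)
    rwa [show k - 1 + (j - k - 1 + 1) = j - 1 by omega]

open Classical in
noncomputable def fibMoves (s : ℕ → Fin n → Fin 3) (m k : ℕ) : Finset ℕ :=
  (range m).filter fun i => FibMove n k (s i) (s (i + 1))

variable {s : ℕ → Fin n → Fin 3} {m k : ℕ}

theorem mem_fibMoves {i : ℕ} : i ∈ fibMoves s m k ↔ i < m ∧ FibMove n k (s i) (s (i + 1)) := by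
  simp [fibMoves]

theorem coe_fibMoves : (fibMoves s m k : Set ℕ) = {i | i < m ∧ FibMove n k (s i) (s (i + 1))} :=
  Set.ext fun _ => mem_fibMoves

theorem fibMoves_subset_succ : fibMoves s m k ⊆ fibMoves s (m + 1) k := fun i hi => by
  rw [mem_fibMoves] at hi ⊢
  exact ⟨by omega, hi.2⟩

theorem card_fibMoves_succ (h : FibMove n k (s m) (s (m + 1))) :
    #(fibMoves s (m + 1) k) = #(fibMoves s m k) + 1 := by
  rw [fibMoves, range_add_one, filter_insert, if_pos h]
  exact card_insert_of_notMem (by simp)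

theorem fib_le_card_fibMoves (hs : IsSolution n m s) (hk : 1 ≤ k) :
    fib (n + 1 - k) ≤ #(fibMoves s m k) := by
  obtain ⟨hstart, hend, hstep⟩ := hs
  have hdecay : ∀ N ≤ m,
      diskPotential k (s 0) ≤ diskPotential k (s N) + #(fibMoves s N k) := by
    intro N hN
    induction N with
    | zero => simp
    | succ N ih =>
      obtain ⟨j, hj⟩ := hstep N hN
      have hmove := diskPotential_le_of_fibMove hk hj
      have ih := ih (by omega)
      split_ifs at hmove with hjk
      · subst hjk
        rw [card_fibMoves_succ hj]
        omega
      · have := card_le_card (fibMoves_subset_succ (s := s) (m := N) (k := k))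
        omega
  simpa [hstart, hend, diskPotential_const hk] using hdecay m le_rfl

theorem sum_card_fibMoves_le (s : ℕ → Fin n → Fin 3) (m : ℕ) (K : Finset ℕ) :
    ∑ k ∈ K, #(fibMoves s m k) ≤ m := by
  classical
  have hdisj : (K : Set ℕ).PairwiseDisjoint (fibMoves s m) := fun j _ k _ hjk =>
    disjoint_left.2 fun _ hij hik =>
      hjk <| FibMove.unique (mem_fibMoves.1 hij).2 (mem_fibMoves.1 hik).2
  rw [← card_biUnion hdisj]
  refine (card_le_card (biUnion_subset.2 fun k _ i hi => ?_)).trans (card_range m).le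
  exact mem_range.2 (mem_fibMoves.1 hi).1

theorem sum_fib_sub (n : ℕ) : ∑ k ∈ Icc 1 n, fib (n + 1 - k) = fib (n + 2) - 1 := by
  have hreflect : ∑ k ∈ Icc 1 n, fib (n + 1 - k) = ∑ i ∈ range n, fib (i + 1) :=
    sum_nbij' (fun k => n - k) (fun i => n - i) (by simp; omega) (by simp; omega)
      (by simp; omega) (by simp; omega) (by simp; intro k _ _; congr 1; omega)
  rw [hreflect, fib_succ_eq_succ_sum, sum_range_succ']
  simp

theorem card_fibMoves_eq_fib (hs : IsSolution n (fib (n + 2) - 1) s) (hk : 1 ≤ k)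
    (hkn : k ≤ n) : #(fibMoves s (fib (n + 2) - 1) k) = fib (n + 1 - k) := by
  have hlower : ∀ j ∈ Icc 1 n, fib (n + 1 - j) ≤ #(fibMoves s (fib (n + 2) - 1) j) :=
    fun j hj => fib_le_card_fibMoves hs (mem_Icc.1 hj).1
  have hsum := le_antisymm (sum_le_sum hlower)
    ((sum_card_fibMoves_le s _ (Icc 1 n)).trans_eq (sum_fib_sub n).symm)
  exact ((sum_eq_sum_iff_of_le hlower).1 hsum k (mem_Icc.2 ⟨hk, hkn⟩)).symm

end HanoiFibonacci

/-- Let `0 < k ≤ n`. In the optimal solution of the Tower of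
Hanoi-Fibonacci with `n` disks, the number of `k`-Fibonacci moves equals `F (n+1-k)`. -/
theorem hanoiFibonacci_count_k_moves (n k : ℕ) (hk0 : 0 < k) (hkn : k ≤ n)
    (s : ℕ → (Fin n → Fin 3)) (hs : IsSolution n (Nat.fib (n + 2) - 1) s) :
    Set.ncard {i | i < Nat.fib (n + 2) - 1 ∧ FibMove n k (s i) (s (i + 1))} =
      Nat.fib (n + 1 - k) := by
  rw [← HanoiFibonacci.coe_fibMoves, Set.ncard_coe_finset]
  exact HanoiFibonacci.card_fibMoves_eq_fib hs hk0 hkn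
end

section
/- Writing |w|_d for the number of occurrences of the letter d ∈ {l, r} in a word w, for every n ≥ 0 one has |μ_{3n}|_r = |μ_{3n}|_l, |μ_{3n+1}|_l − |μ_{3n+1}|_r = 1, and |μ_{3n+2}|_r − |μ_{3n+2}|_l = 1. -/
set_option synthInstance.maxSize 400 in
instance (n k : ℕ) (s s' : Fin n → Fin 3) : Decidable (FibMove n k s s') := by
  unfold FibMove; infer_instance

/-- The word `μ_n ∈ {l, r}^{F n}` recording the directions of the successive
`1`-Fibonacci moves (moves of disk `1` alone) in a solution `s` of length
`F (n+2) - 1` of the Tower of Hanoi-Fibonacci with `n` disks.  The letter `r`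
(coded by `true`) means that disk `1` moves from `A` to `B`, from `B` to `C`
or from `C` to `A` (i.e. its peg increases by `1` modulo `3`); the letter `l`
is coded by `false`. -/
def muWord (n : ℕ) (s : ℕ → (Fin n → Fin 3)) : List Bool :=
  ((List.range (Nat.fib (n + 2) - 1)).filter
      (fun i => decide (FibMove n 1 (s i) (s (i + 1))))).map
    (fun i => if h : 0 < n then decide (s (i + 1) ⟨0, h⟩ = s i ⟨0, h⟩ + 1) else true)

/-!
A path between perfect states of `n + 2` disks has to move the largest disk. Just before its first
move the other `n + 1` disks form a perfect state on the third peg; just after its last move they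
all lie on one peg except disk `n + 1`, which travelled together with the largest disk. Induction
on `n`, carrying three lower bounds at once (`F (n+2) - 1` between distinct perfect states,
`F (n+1) - 1` from an almost perfect state, `F n` whenever the largest disk has to change peg),
shows that a path of length `F (n+2) - 1` moves the largest disk exactly once. Its drift (right
minus left moves of disk 1) is therefore `± balance n` with
`balance (n + 2) = -balance (n + 1) - balance n`, a recursion of period 3.
-/

theorem FibMove.apply_of_le {n k : ℕ} {s s' : Fin n → Fin 3} (h : FibMove n k s s') (i : Fin n)
    (hi : k ≤ i) : s' i = s i := by
  obtain ⟨-, -, -, -, -, -, -, -, -, -, -, -, hkeep⟩ := h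
  exact hkeep i (by omega) (by omega)

theorem FibMove.apply_ne {n k : ℕ} {s s' : Fin n → Fin 3} (h : FibMove n k s s') (i : Fin n)
    (hi : (i : ℕ) + 1 = k) : s' i ≠ s i := by
  obtain ⟨-, -, X, Y, Z, -, -, hXZ, hX, -, -, hZ, -⟩ := h
  rw [hZ i (Or.inl hi), hX i hi]
  exact hXZ.symm

theorem FibMove.disk_unique {n k k' : ℕ} {s s' : Fin n → Fin 3} (h : FibMove n k s s')
    (h' : FibMove n k' s s') : k = k' := by
  wlog hlt : k < k' generalizing k k'
  · obtain hle | heq := (not_lt.1 hlt).lt_or_eq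
    · exact (this h' h hle).symm
    · exact heq.symm
  have hk' : 1 ≤ k' ∧ k' ≤ n := ⟨h'.1, h'.2.1⟩
  exact absurd (h.apply_of_le ⟨k' - 1, by omega⟩ (by simp; omega))
    (h'.apply_ne ⟨k' - 1, by omega⟩ (by simp; omega))

theorem fibMove_succ_iff {n k : ℕ} (hk : k ≤ n) {s s' : Fin (n + 1) → Fin 3} :
    FibMove (n + 1) k s s' ↔
      FibMove n k (Fin.init s) (Fin.init s') ∧ s' (Fin.last n) = s (Fin.last n) := by
  simp only [FibMove, Fin.forall_fin_succ' (n := n), Fin.init, Fin.val_last, Fin.val_castSucc]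
  constructor
  · rintro ⟨h1, -, X, Y, Z, hXY, hYZ, hXZ, ⟨hX, -⟩, ⟨hnX, -⟩, ⟨hY, -⟩, ⟨hZ, -⟩, hkeep, htop⟩
    exact ⟨⟨h1, hk, X, Y, Z, hXY, hYZ, hXZ, hX, hnX, hY, hZ, hkeep⟩, htop (by omega) (by omega)⟩
  · rintro ⟨⟨h1, -, X, Y, Z, hXY, hYZ, hXZ, hX, hnX, hY, hZ, hkeep⟩, htop⟩
    refine ⟨h1, by omega, X, Y, Z, hXY, hYZ, hXZ, ⟨hX, ?_⟩, ⟨hnX, ?_⟩, ⟨hY, ?_⟩, ⟨hZ, ?_⟩,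
      hkeep, fun _ _ => htop⟩ <;> intro h <;> omega

theorem List.count_true_sub_count_false_map_filter {α : Type*} (l : List α) (p f : α → Bool) :
    (((l.filter p).map f).count true : ℤ) - ((l.filter p).map f).count false =
      (l.map fun a => if p a then (if f a then 1 else -1) else 0).sum := by
  induction l with
  | nil => simp
  | cons a l ih =>
    rw [List.filter_cons, List.map_cons, List.sum_cons, ← ih]
    cases hp : p a <;> cases hf : f a <;> simp [hf] <;> ring

namespace HanoiFibonacci

open Nat (fib)

abbrev State (n : ℕ) := Fin n → Fin 3

def perfect (n : ℕ) (a : Fin 3) : State n := fun _ => a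

@[simp]
theorem perfect_apply {n : ℕ} {a : Fin 3} (i : Fin n) : perfect n a i = a := rfl

def almostPerfect (n : ℕ) (Y Z : Fin 3) : State n := fun i => if (i : ℕ) + 1 = n then Z else Y

theorem almostPerfect_last {n : ℕ} {Y Z : Fin 3} :
    almostPerfect (n + 1) Y Z (Fin.last n) = Z := by
  simp [almostPerfect]

theorem init_almostPerfect {n : ℕ} {Y Z : Fin 3} :
    Fin.init (almostPerfect (n + 2) Y Z) = perfect (n + 1) Y := by
  funext i
  simp [almostPerfect, Fin.init, i.isLt.ne]

theorem fibMove_largest {n : ℕ} {s s' : State (n + 1)} (h : FibMove (n + 1) (n + 1) s s') :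
    ∃ Y Z, s (Fin.last n) ≠ Y ∧ Y ≠ Z ∧ s (Fin.last n) ≠ Z ∧ Fin.init s = perfect n Y ∧
      Fin.init s' = almostPerfect n Y Z ∧ s' (Fin.last n) = Z := by
  obtain ⟨-, -, X, Y, Z, hXY, hYZ, hXZ, hX, -, hY, hZ, hkeep⟩ := h
  have hlast : s (Fin.last n) = X := hX _ (by simp)
  refine ⟨Y, Z, hlast ▸ hXY, hYZ, hlast ▸ hXZ, funext fun i => hY _ (by simp), funext fun i => ?_,
    hZ _ (by simp)⟩
  have hcast : (i.castSucc : ℕ) = i := Fin.val_castSucc i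
  by_cases hi : (i : ℕ) + 1 = n
  · simp [almostPerfect, hi, Fin.init, hZ i.castSucc (Or.inr (by omega))]
  · simp [almostPerfect, hi, Fin.init, hkeep i.castSucc (by omega) (by omega),
      hY i.castSucc (by omega)]

def IsPath (n : ℕ) (s : ℕ → State n) (i j : ℕ) : Prop :=
  ∀ t, i ≤ t → t < j → ∃ k, FibMove n k (s t) (s (t + 1))

def IsPathFixingLast (n : ℕ) (s : ℕ → State (n + 1)) (i j : ℕ) : Prop :=
  ∀ t, i ≤ t → t < j → ∃ k ≤ n, FibMove (n + 1) k (s t) (s (t + 1))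

section Paths

variable {n : ℕ} {i j : ℕ}

theorem IsPath.mono {s : ℕ → State n} (h : IsPath n s i j) {i' j' : ℕ} (hi : i ≤ i') (hj : j' ≤ j) :
    IsPath n s i' j' :=
  fun t h1 h2 => h t (hi.trans h1) (h2.trans_le hj)

variable {s : ℕ → State (n + 1)}

theorem IsPathFixingLast.init (h : IsPathFixingLast n s i j) :
    IsPath n (fun t => Fin.init (s t)) i j := fun t h1 h2 =>
  let ⟨k, hk, hm⟩ := h t h1 h2
  ⟨k, ((fibMove_succ_iff hk).1 hm).1⟩

theorem IsPathFixingLast.last_eq (h : IsPathFixingLast n s i j) (hij : i ≤ j) :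
    s j (Fin.last n) = s i (Fin.last n) := by
  induction j, hij using Nat.le_induction with
  | base => rfl
  | succ j hij ih =>
    obtain ⟨k, hk, hm⟩ := h j hij j.lt_succ_self
    rw [((fibMove_succ_iff hk).1 hm).2, ih fun t h1 h2 => h t h1 (by omega)]

theorem IsPathFixingLast.le_of_largest (h : IsPathFixingLast n s i j) {t : ℕ} (hit : i ≤ t)
    (hbig : FibMove (n + 1) (n + 1) (s t) (s (t + 1))) : j ≤ t := by
  by_contra! htj
  obtain ⟨k, hk, hm⟩ := h t hit htj
  have := hm.disk_unique hbig
  omega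

theorem IsPath.isPathFixingLast (h : IsPath (n + 1) s i j)
    (hbig : ∀ t, i ≤ t → t < j → ¬ FibMove (n + 1) (n + 1) (s t) (s (t + 1))) :
    IsPathFixingLast n s i j := by
  intro t h1 h2
  obtain ⟨k, hm⟩ := h t h1 h2
  obtain hlt | rfl := (show k ≤ n + 1 from hm.2.1).lt_or_eq
  · exact ⟨k, by omega, hm⟩
  · exact absurd hm (hbig t h1 h2)

theorem IsPath.exists_largest (h : IsPath (n + 1) s i j) (hij : i ≤ j)
    (hne : s j (Fin.last n) ≠ s i (Fin.last n)) :
    ∃ t, i ≤ t ∧ t < j ∧ FibMove (n + 1) (n + 1) (s t) (s (t + 1)) := by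
  by_contra! hbig
  exact hne ((h.isPathFixingLast hbig).last_eq hij)

theorem IsPath.exists_first_largest (h : IsPath (n + 1) s i j)
    (hbig : ∃ t, i ≤ t ∧ t < j ∧ FibMove (n + 1) (n + 1) (s t) (s (t + 1))) :
    ∃ t, i ≤ t ∧ t < j ∧ FibMove (n + 1) (n + 1) (s t) (s (t + 1)) ∧
      IsPathFixingLast n s i t := by
  classical
  obtain ⟨hit, htj, hmove⟩ := Nat.find_spec hbig
  exact ⟨_, hit, htj, hmove, (h.mono le_rfl htj.le).isPathFixingLast
    fun t h1 h2 hb => Nat.find_min hbig h2 ⟨h1, h2.trans htj, hb⟩⟩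

theorem IsPath.exists_last_largest (h : IsPath (n + 1) s i j)
    (hbig : ∃ t, i ≤ t ∧ t < j ∧ FibMove (n + 1) (n + 1) (s t) (s (t + 1))) :
    ∃ t, i ≤ t ∧ t < j ∧ FibMove (n + 1) (n + 1) (s t) (s (t + 1)) ∧
      IsPathFixingLast n s (t + 1) j := by
  classical
  obtain ⟨t₀, h₀⟩ := hbig
  obtain ⟨t, ht, hmax⟩ := ((Finset.Ico i j).filter fun t =>
    FibMove (n + 1) (n + 1) (s t) (s (t + 1))).exists_max_image id
      ⟨t₀, by simpa [and_assoc] using h₀⟩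
  simp only [Finset.mem_filter, Finset.mem_Ico, id, and_imp] at ht hmax
  refine ⟨t, ht.1.1, ht.1.2, ht.2, (h.mono (by omega) le_rfl).isPathFixingLast
    fun u h1 h2 hb => ?_⟩
  have := hmax u (by omega) h2 hb
  omega

end Paths

def moveSign (n : ℕ) (s : ℕ → State n) (t : ℕ) : ℤ :=
  if h : FibMove n 1 (s t) (s (t + 1)) then
    if s (t + 1) ⟨0, h.2.1⟩ = s t ⟨0, h.2.1⟩ + 1 then 1 else -1
  else 0

def drift (n : ℕ) (s : ℕ → State n) (i j : ℕ) : ℤ := ∑ t ∈ Finset.Ico i j, moveSign n s t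

section Drift

variable {n : ℕ} {i j : ℕ}

theorem moveSign_eq_zero {s : ℕ → State n} {t k : ℕ} (h : FibMove n k (s t) (s (t + 1)))
    (hk : k ≠ 1) : moveSign n s t = 0 :=
  dif_neg fun h1 => hk (h.disk_unique h1)

theorem drift_eq_add {s : ℕ → State n} {t : ℕ} (hit : i ≤ t) (htj : t < j) :
    drift n s i j = drift n s i t + moveSign n s t + drift n s (t + 1) j := by
  rw [drift, ← Finset.sum_Ico_consecutive _ hit htj.le,
    Finset.sum_eq_sum_Ico_succ_bot htj, drift, drift, add_assoc]

theorem moveSign_succ {s : ℕ → State (n + 2)} {t : ℕ}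
    (h : s (t + 1) (Fin.last (n + 1)) = s t (Fin.last (n + 1))) :
    moveSign (n + 2) s t = moveSign (n + 1) (fun t => Fin.init (s t)) t := by
  have hiff := fibMove_succ_iff (k := 1) (by omega) (s := s t) (s' := s (t + 1))
  by_cases h1 : FibMove (n + 1) 1 (Fin.init (s t)) (Fin.init (s (t + 1)))
  · rw [moveSign, moveSign, dif_pos (hiff.2 ⟨h1, h⟩), dif_pos h1]
    rfl
  · rw [moveSign, moveSign, dif_neg fun h' => h1 (hiff.1 h').1, dif_neg h1]

theorem IsPathFixingLast.drift_eq {s : ℕ → State (n + 2)} (h : IsPathFixingLast (n + 1) s i j) :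
    drift (n + 2) s i j = drift (n + 1) (fun t => Fin.init (s t)) i j := by
  refine Finset.sum_congr rfl fun t ht => ?_
  rw [Finset.mem_Ico] at ht
  obtain ⟨k, hk, hm⟩ := h t ht.1 ht.2
  exact moveSign_succ ((fibMove_succ_iff hk).1 hm).2

end Drift

def turn (a c : Fin 3) : ℤ := if c = a + 1 then 1 else -1

def balance : ℕ → ℤ
  | 0 => 0
  | 1 => 1
  | n + 2 => -balance (n + 1) - balance n

theorem turn_eq_neg {a b c : Fin 3} (hab : a ≠ b) (hbc : b ≠ c) (hac : a ≠ c) :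
    turn a b = -turn a c ∧ turn b c = -turn a c := by
  revert a b c; decide

theorem turn_mul_balance_add_two {a b c : Fin 3} (hab : a ≠ b) (hbc : b ≠ c) (hac : a ≠ c) (n : ℕ) :
    turn a c * balance (n + 2) = turn a b * balance (n + 1) + turn b c * balance n := by
  obtain ⟨h1, h2⟩ := turn_eq_neg hab hbc hac
  rw [h1, h2, balance]
  ring

theorem balance_add_three (n : ℕ) : balance (n + 3) = balance n := by
  rw [balance, balance]
  ring

theorem balance_three_mul_add (n r : ℕ) : balance (3 * n + r) = balance r := by
  induction n with
  | zero => simp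
  | succ n ih => rw [show 3 * (n + 1) + r = 3 * n + r + 3 by ring, balance_add_three, ih]

-- `AlmostPerfectBound n` and `LargestMoveBound n` concern `n + 1` disks, so that the three bounds
-- advance together in the induction below.
def PerfectBound (n : ℕ) : Prop :=
  ∀ (s : ℕ → State n) (i j : ℕ) (a c : Fin 3), i ≤ j → IsPath n s i j →
    s i = perfect n a → s j = perfect n c → a ≠ c →
    i + fib (n + 2) ≤ j + 1 ∧ (j + 1 = i + fib (n + 2) → drift n s i j = turn a c * balance n)

def AlmostPerfectBound (n : ℕ) : Prop :=
  ∀ (s : ℕ → State (n + 1)) (i j : ℕ) (Y Z : Fin 3), i ≤ j → IsPath (n + 1) s i j →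
    s i = almostPerfect (n + 1) Y Z → s j = perfect (n + 1) Z → Y ≠ Z →
    i + fib (n + 2) ≤ j + 1 ∧
      (j + 1 = i + fib (n + 2) → drift (n + 1) s i j = turn Y Z * balance n)

def LargestMoveBound (n : ℕ) : Prop :=
  ∀ (s : ℕ → State (n + 1)) (i j : ℕ) (W : Fin 3), i ≤ j → IsPath (n + 1) s i j →
    s i (Fin.last n) ≠ W → s j = perfect (n + 1) W → i + fib (n + 1) ≤ j

theorem perfectBound_zero : PerfectBound 0 := by
  intro s i j a c hij _ _ _ _
  refine ⟨by simpa using hij, fun _ => ?_⟩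
  rw [balance, mul_zero]
  exact Finset.sum_eq_zero fun t _ => dif_neg fun h => absurd h.2.1 (by norm_num)

theorem perfectBound_one : PerfectBound 1 := by
  intro s i j a c hij hs hi hj hac
  have hij : i ≠ j := by
    rintro rfl
    exact hac (congrFun (hi.symm.trans hj) 0)
  have hfib : fib (1 + 2) = 2 := rfl
  refine ⟨by omega, fun htight => ?_⟩
  obtain rfl : j = i + 1 := by omega
  obtain ⟨k, hm⟩ := hs i le_rfl (lt_add_one i)
  obtain rfl : k = 1 := le_antisymm hm.2.1 hm.1
  rw [drift, Nat.Ico_succ_singleton, Finset.sum_singleton, moveSign, dif_pos hm]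
  simp [hi, hj, turn, balance]

theorem almostPerfectBound_zero : AlmostPerfectBound 0 := by
  intro s i j Y Z hij _ _ _ _
  refine ⟨by simpa using hij, fun htight => ?_⟩
  obtain rfl : j = i := by simpa using htight
  simp [drift, balance]

theorem largestMoveBound_zero : LargestMoveBound 0 := by
  intro s i j W hij _ hi hj
  have : i ≠ j := by
    rintro rfl
    exact hi (by rw [hj]; rfl)
  simp only [zero_add, Nat.fib_one]
  omega

section Induction

variable {n : ℕ}

theorem perfectBound_succ (hP : PerfectBound (n + 1)) (hA : AlmostPerfectBound n) :
    PerfectBound (n + 2) := by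
  intro s i j a c hij hs hi hj hac
  have hbig := hs.exists_largest hij (by rw [hi, hj]; exact hac.symm)
  obtain ⟨t₁, hit₁, ht₁j, hbig₁, hfix₁⟩ := hs.exists_first_largest hbig
  obtain ⟨t₂, hit₂, ht₂j, hbig₂, hfix₂⟩ := hs.exists_last_largest hbig
  have ht₁₂ : t₁ ≤ t₂ := hfix₁.le_of_largest hit₂ hbig₂
  obtain ⟨Y₁, Z₁, haY₁, -, -, hinit₁, -, -⟩ := fibMove_largest hbig₁
  obtain ⟨Y₂, Z₂, -, hYZ₂, -, hpre₂, hinit₂, hlast₂⟩ := fibMove_largest hbig₂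
  rw [hfix₁.last_eq hit₁, hi, perfect_apply] at haY₁
  obtain rfl : Z₂ = c := by rw [← hlast₂, ← hfix₂.last_eq ht₂j, hj]; rfl
  obtain ⟨hlen₁, hdrift₁⟩ := hP _ i t₁ a Y₁ hit₁ hfix₁.init (by rw [hi]; rfl) hinit₁ haY₁
  obtain ⟨hlen₂, hdrift₂⟩ :=
    hA _ (t₂ + 1) j Y₂ Z₂ ht₂j hfix₂.init hinit₂ (by rw [hj]; rfl) hYZ₂
  have hfib : fib (n + 2 + 2) = fib (n + 2) + fib (n + 1 + 2) := Nat.fib_add_two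
  refine ⟨by omega, fun htight => ?_⟩
  -- A tight path moves the largest disk exactly once.
  obtain rfl : t₁ = t₂ := by omega
  obtain rfl : Y₂ = Y₁ := congrFun (hpre₂.symm.trans hinit₁) 0
  rw [drift_eq_add hit₁ ht₁j, moveSign_eq_zero hbig₁ (by omega), hfix₁.drift_eq,
    hfix₂.drift_eq, hdrift₁ (by omega), hdrift₂ (by omega), add_zero,
    turn_mul_balance_add_two haY₁ hYZ₂ hac]

theorem almostPerfectBound_succ (hP : PerfectBound (n + 1)) (hA : AlmostPerfectBound n)
    (hL : LargestMoveBound n) : AlmostPerfectBound (n + 1) := by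
  intro s i j Y Z hij hs hi hj hYZ
  by_cases hbig : ∃ t, i ≤ t ∧ t < j ∧ FibMove (n + 2) (n + 2) (s t) (s (t + 1))
  · -- The largest disk has to leave `Z` and come back: after its first move, the smaller disks
    -- need `F (n+1)` moves before it moves again, and `F (n+2) - 1` after its last move.
    have hfib : fib (n + 1 + 2) = fib (n + 1) + fib (n + 2) := Nat.fib_add_two
    suffices i + fib (n + 1 + 2) < j + 1 from ⟨this.le, fun h => absurd h this.ne'⟩
    obtain ⟨t₁, hit₁, ht₁j, hbig₁, hfix₁⟩ := hs.exists_first_largest hbig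
    obtain ⟨Y₁, Z₁, -, -, hZZ₁, -, hinit₁, hlast₁⟩ := fibMove_largest hbig₁
    rw [hfix₁.last_eq hit₁, hi, almostPerfect_last] at hZZ₁
    have hs' := hs.mono (i' := t₁ + 1) (by omega) le_rfl
    have hbig' := hs'.exists_largest ht₁j (by rw [hj, hlast₁]; exact hZZ₁)
    obtain ⟨u, hu, -, hbigu, hfixu⟩ := hs'.exists_first_largest hbig'
    obtain ⟨t₂, ht₂, ht₂j, hbig₂, hfix₂⟩ := hs'.exists_last_largest hbig'
    have hut₂ : u ≤ t₂ := hfixu.le_of_largest ht₂ hbig₂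
    obtain ⟨Yu, -, hZYu, -, -, hinitu, -, -⟩ := fibMove_largest hbigu
    rw [hfixu.last_eq hu, hlast₁] at hZYu
    obtain ⟨Y₂, Z₂, -, hYZ₂, -, -, hinit₂, hlast₂⟩ := fibMove_largest hbig₂
    obtain rfl : Z₂ = Z := by rw [← hlast₂, ← hfix₂.last_eq ht₂j, hj]; rfl
    have hlenu := hL _ (t₁ + 1) u Yu hu hfixu.init
      (by rw [hinit₁, almostPerfect_last]; exact hZYu) hinitu
    have hlen₂ := (hA _ (t₂ + 1) j Y₂ Z₂ ht₂j hfix₂.init hinit₂ (by rw [hj]; rfl) hYZ₂).1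
    omega
  · have hfix := hs.isPathFixingLast fun t h₁ h₂ hb => hbig ⟨t, h₁, h₂, hb⟩
    obtain ⟨hlen, hdrift⟩ := hP _ i j Y Z hij hfix.init
      (by rw [hi]; exact init_almostPerfect) (by rw [hj]; rfl) hYZ
    exact ⟨hlen, fun h => hfix.drift_eq.trans (hdrift h)⟩

theorem largestMoveBound_succ (hA : AlmostPerfectBound n) : LargestMoveBound (n + 1) := by
  intro s i j W hij hs hi hj
  show i + fib (n + 2) ≤ j
  obtain ⟨t, hit, htj, hbig, hfix⟩ :=
    hs.exists_last_largest (hs.exists_largest hij (by rw [hj]; exact hi.symm))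
  obtain ⟨Y, Z, -, hYZ, -, -, hinit, hlast⟩ := fibMove_largest hbig
  obtain rfl : Z = W := by rw [← hlast, ← hfix.last_eq htj, hj]; rfl
  have := (hA _ (t + 1) j Y Z htj hfix.init hinit (by rw [hj]; rfl) hYZ).1
  omega

end Induction

theorem perfectBound_succ_and_almostPerfectBound_and_largestMoveBound (n : ℕ) :
    PerfectBound (n + 1) ∧ AlmostPerfectBound n ∧ LargestMoveBound n := by
  induction n with
  | zero => exact ⟨perfectBound_one, almostPerfectBound_zero, largestMoveBound_zero⟩
  | succ n ih =>
    obtain ⟨hP, hA, hL⟩ := ih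
    exact ⟨perfectBound_succ hP hA, almostPerfectBound_succ hP hA hL, largestMoveBound_succ hA⟩

theorem perfectBound : ∀ n, PerfectBound n
  | 0 => perfectBound_zero
  | n + 1 => (perfectBound_succ_and_almostPerfectBound_and_largestMoveBound n).1

theorem IsSolution.drift_eq {n : ℕ} {s : ℕ → State n} (h : IsSolution n (fib (n + 2) - 1) s) :
    drift n s 0 (fib (n + 2) - 1) = -balance n := by
  obtain ⟨h0, hm, hmoves⟩ := h
  have hpos : 0 < fib (n + 2) := Nat.fib_pos.2 (by omega)
  rw [(perfectBound n s 0 _ 0 2 (Nat.zero_le _) (fun t _ ht => hmoves t ht) h0 hm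
    (by decide)).2 (by omega)]
  simp [turn]

theorem muWord_count_sub (n : ℕ) (s : ℕ → State n) :
    ((muWord n s).count true : ℤ) - (muWord n s).count false = drift n s 0 (fib (n + 2) - 1) := by
  rw [muWord, List.count_true_sub_count_false_map_filter, drift, ← Finset.range_eq_Ico]
  refine (congrArg List.sum (List.map_congr_left fun t _ => ?_)).trans rfl
  by_cases h : FibMove n 1 (s t) (s (t + 1))
  · have hn : 0 < n := h.2.1
    simp [moveSign, h, hn]
  · simp [moveSign, h]

end HanoiFibonacci

/-- Writing `|w|_d` for the number of occurrences of the letter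
`d ∈ {l, r}` in a word `w` (with `r = true` and `l = false`), for every `n ≥ 0` one has
`|μ_{3n}|_r = |μ_{3n}|_l`, `|μ_{3n+1}|_l − |μ_{3n+1}|_r = 1`, and
`|μ_{3n+2}|_r − |μ_{3n+2}|_l = 1`. -/
theorem hanoiFibonacci_mu_balance
    (sol : (n : ℕ) → ℕ → (Fin n → Fin 3))
    (hsol : ∀ n, IsSolution n (Nat.fib (n + 2) - 1) (sol n))
    (μ : ℕ → List Bool) (hμ : ∀ n, μ n = muWord n (sol n)) (n : ℕ) :
    (μ (3 * n)).count true = (μ (3 * n)).count false ∧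
    (μ (3 * n + 1)).count false = (μ (3 * n + 1)).count true + 1 ∧
    (μ (3 * n + 2)).count true = (μ (3 * n + 2)).count false + 1 := by
  open HanoiFibonacci in
  have hcount (N : ℕ) : ((μ N).count true : ℤ) - (μ N).count false = -balance N := by
    rw [hμ, muWord_count_sub, (hsol N).drift_eq]
  have h₀ := hcount (3 * n)
  have h₁ := hcount (3 * n + 1)
  have h₂ := hcount (3 * n + 2)
  rw [show balance (3 * n) = 0 from balance_three_mul_add n 0] at h₀
  rw [balance_three_mul_add] at h₁ h₂
  simp only [balance] at h₀ h₁ h₂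
  omega
end
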